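/- arXiv:2205.12250 — 9 statements merged into one kernel-verified Lean document; each statement's English description precedes it below -/
import Mathlib

section
/- Let n, d ≥ 1 and let f : (ℝ^d)^n → ℂ be a polynomial in the nd real coordinates of total degree at most n − 2. Then the antisymmetrization 𝒜f is identically zero. -/
open MeasureTheory Complex Matrix
open scoped BigOperators RealInnerProductSpace ENNReal NNReal

noncomputable section

abbrev Vec (d : ℕ) := EuclideanSpace ℝ (Fin d)
abbrev Conf (n d : ℕ) := Fin n → Vec d

/-- `w·x = Σᵢ ⟪wᵢ, xᵢ⟫`. -/
def dotConf {n d : ℕ} (w x : Conf n d) : ℝ := ∑ i, ⟪w i, x i⟫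

/-- Antisymmetrization `(𝒜f)(x) = (1/√(n!)) Σ_π sign(π) f(x∘π)`. -/
def antisym {n d : ℕ} (f : Conf n d → ℂ) : Conf n d → ℂ := fun x =>
  ((Real.sqrt (Nat.factorial n) : ℝ) : ℂ)⁻¹ *
    ∑ π : Equiv.Perm (Fin n), ((Equiv.Perm.sign π : ℤ) : ℂ) * f (fun i => x (π i))

/-- Product measure `ρₙ = ρ^{⊗n}`. -/
def prodMeasure {d : ℕ} (ρ : Measure (Vec d)) (n : ℕ) : Measure (Conf n d) :=
  Measure.pi fun _ => ρ

/-- `‖f‖_ρ² = ∫ |f|² dρₙ`. -/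
def normSq {n d : ℕ} (ρ : Measure (Vec d)) (f : Conf n d → ℂ) : ℝ :=
  ∫ x, ‖f x‖ ^ 2 ∂(prodMeasure ρ n)

/-- `ρ̂(v) = ∫ e^{-i v·x} dρ(x)`. -/
def ftMeasure {d : ℕ} (ρ : Measure (Vec d)) (v : Vec d) : ℂ :=
  ∫ x, Complex.exp (-(Complex.I * ((⟪v, x⟫ : ℝ) : ℂ))) ∂ρ

/-- Plane wave `e_u(x) = exp(i u·x)`. -/
def planeWave {n d : ℕ} (u : Conf n d) : Conf n d → ℂ := fun x =>
  Complex.exp (Complex.I * ((dotConf u x : ℝ) : ℂ))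

/-- `⟨f, g⟩_ρ = ∫ conj(f) g dρₙ`. -/
def innerProd {n d : ℕ} (ρ : Measure (Vec d)) (f g : Conf n d → ℂ) : ℂ :=
  ∫ x, (starRingEnd ℂ) (f x) * g x ∂(prodMeasure ρ n)

/-- Overlap kernel `D_w(θ,θ̃) = det(ρ̂(θwᵢ-θ̃wⱼ))`. -/
def Dker {n d : ℕ} (ρ : Measure (Vec d)) (w : Conf n d) (θ θ' : ℝ) : ℂ :=
  Matrix.det (Matrix.of fun i j : Fin n => ftMeasure ρ (θ • w i - θ' • w j))

/-- Gaussian overlap kernel `D^N_w(θ,θ̃) = det(exp(-‖θwᵢ-θ̃wⱼ‖²/2))`. -/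
def DN {n d : ℕ} (w : Conf n d) (θ θ' : ℝ) : ℝ :=
  Matrix.det (Matrix.of fun i j : Fin n => Real.exp (-‖θ • w i - θ' • w j‖ ^ 2 / 2))

/-- `δ_w = (1/2) min_{i<j} min_{±} ‖wᵢ ± wⱼ‖`. -/
def sep {n d : ℕ} (w : Conf n d) : ℝ :=
  (1 / 2) * ⨅ p : {p : Fin n × Fin n // p.1 < p.2},
    min ‖w p.1.1 + w p.1.2‖ ‖w p.1.1 - w p.1.2‖

/-- `G_ρ(t) = sup{|ρ̂(y)| : ‖y‖ ≥ t}`. -/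
def Gtail {d : ℕ} (ρ : Measure (Vec d)) (t : ℝ) : ℝ :=
  sSup {r | ∃ y : Vec d, t ≤ ‖y‖ ∧ r = ‖ftMeasure ρ y‖}

/-- `‖w‖ = (Σᵢ ‖wᵢ‖²)^{1/2}`. -/
def confNorm {n d : ℕ} (w : Conf n d) : ℝ := Real.sqrt (∑ i, ‖w i‖ ^ 2)

/-- `‖v‖_∞` : max of the `nd` scalar coordinates' absolute values. -/
def linf {n d : ℕ} (v : Conf n d) : ℝ := ⨆ i : Fin n, ⨆ j : Fin d, |v i j|

/-- Standard Gaussian measure `N(0, I_d)` on `ℝ^d`. -/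
def stdGaussian (d : ℕ) : Measure (Vec d) :=
  volume.withDensity fun x =>
    ENNReal.ofReal ((2 * Real.pi) ^ (-(d : ℝ) / 2) * Real.exp (-‖x‖ ^ 2 / 2))

/-
A monomial of degree at most `n - 2` involves at most `n - 2` of the `n` rows of variables, so some
transposition `τ` of two unused rows fixes it. Precomposing with `τ` is then a sign-reversing
involution on the terms of the signed sum over permutations, which therefore vanishes monomial by
monomial.
-/

theorem Equiv.Perm.sum_sign_smul_eq_zero_of_mul_swap {α M : Type*} [DecidableEq α] [Fintype α]
    [AddCommGroup M] (F : Equiv.Perm α → M) {a b : α} (hab : a ≠ b)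
    (hF : ∀ σ, F (σ * Equiv.swap a b) = F σ) :
    ∑ σ, Equiv.Perm.sign σ • F σ = 0 :=
  Finset.sum_involution (fun σ _ => σ * Equiv.swap a b)
    (fun σ _ => by simp [Equiv.Perm.sign_swap hab, hF])
    (fun _ _ _ => (not_congr Equiv.mul_swap_eq_iff).mpr hab) (fun _ _ => Finset.mem_univ _)
    fun σ _ => Equiv.mul_swap_involutive a b σ

theorem Finsupp.card_support_le_sum {σ : Type*} (m : σ →₀ ℕ) :
    m.support.card ≤ m.sum fun _ e => e := by
  rw [Finset.card_eq_sum_ones, Finsupp.sum]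
  exact Finset.sum_le_sum fun p hp => Nat.one_le_iff_ne_zero.mpr (Finsupp.mem_support_iff.mp hp)

theorem Finset.exists_ne_notMem_notMem_of_card_add_two_le {ι : Type*} [Fintype ι]
    [DecidableEq ι] (s : Finset ι) (hs : s.card + 2 ≤ Fintype.card ι) :
    ∃ a b, a ≠ b ∧ a ∉ s ∧ b ∉ s := by
  have : 1 < sᶜ.card := by rw [Finset.card_compl]; omega
  obtain ⟨a, ha, b, hb, hab⟩ := Finset.one_lt_card.mp this
  exact ⟨a, b, hab, Finset.mem_compl.mp ha, Finset.mem_compl.mp hb⟩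

theorem MvPolynomial.sum_sign_smul_eval_perm_eq_zero {R ι κ : Type*} [CommRing R] [Fintype ι]
    [DecidableEq ι] (P : MvPolynomial (ι × κ) R) (hP : P.totalDegree + 2 ≤ Fintype.card ι)
    (x : ι → κ → R) :
    ∑ π : Equiv.Perm ι, Equiv.Perm.sign π • MvPolynomial.eval (fun p => x (π p.1) p.2) P = 0 := by
  simp only [MvPolynomial.eval_eq, Finset.smul_sum]
  rw [Finset.sum_comm]
  refine Finset.sum_eq_zero fun m hm => ?_
  have hrows : (m.support.image Prod.fst).card + 2 ≤ Fintype.card ι :=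
    le_trans (by grw [Finset.card_image_le, Finsupp.card_support_le_sum,
      MvPolynomial.le_totalDegree hm]) hP
  obtain ⟨a, b, hab, ha, hb⟩ := Finset.exists_ne_notMem_notMem_of_card_add_two_le _ hrows
  have hfix : ∀ p ∈ m.support, Equiv.swap a b p.1 = p.1 := fun p hp =>
    Equiv.swap_apply_of_ne_of_ne (fun h => ha (Finset.mem_image.mpr ⟨p, hp, h⟩))
      (fun h => hb (Finset.mem_image.mpr ⟨p, hp, h⟩))
  simp only [← mul_smul_comm, ← Finset.mul_sum]
  refine mul_eq_zero_of_right _ (Equiv.Perm.sum_sign_smul_eq_zero_of_mul_swap _ hab fun π => ?_)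
  exact Finset.prod_congr rfl fun p hp => by rw [Equiv.Perm.mul_apply, hfix p hp]

theorem stmt1_general (n d : ℕ)
    (f : Conf n d → ℂ) (P : MvPolynomial (Fin n × Fin d) ℂ)
    (hdeg : P.totalDegree + 2 ≤ n)
    (hf : ∀ x, f x = MvPolynomial.eval (fun p => ((x p.1 p.2 : ℝ) : ℂ)) P) :
    antisym f = 0 := by
  funext x
  have hsum := MvPolynomial.sum_sign_smul_eval_perm_eq_zero P (by simpa using hdeg)
    fun i j => ((x i j : ℝ) : ℂ)
  simp only [Units.smul_def, zsmul_eq_mul] at hsum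
  simp only [antisym, hf, hsum, mul_zero, Pi.zero_apply]

/-- the antisymmetrization of a polynomial of total degree ≤ n-2 vanishes. -/
theorem stmt1 (n d : ℕ) (hn : 1 ≤ n) (hd : 1 ≤ d)
    (f : Conf n d → ℂ) (P : MvPolynomial (Fin n × Fin d) ℂ)
    (hdeg : P.totalDegree + 2 ≤ n)
    (hf : ∀ x, f x = MvPolynomial.eval (fun p => ((x p.1 p.2 : ℝ) : ℂ)) P) :
    antisym f = 0 :=
  stmt1_general n d f P hdeg hf

end
end

section
/- Let ρ be a probability measure on ℝ^d, n ≥ 1, and v, w ∈ (ℝ^d)^n. For u ∈ (ℝ^d)^n define the plane wave e_u : (ℝ^d)^n → ℂ by e_u(x) = exp(i u·x). Then ⟨𝒜e_v, 𝒜e_w⟩_ρ = det( (ρ̂(v_i − w_j))_{i,j=1}^n ). -/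
open MeasureTheory Complex Matrix
open scoped BigOperators RealInnerProductSpace ENNReal NNReal

noncomputable section

/-! Reindexing the sum over permutations gives `𝒜 e_u = (n!)^{-1/2} Σ_π sign π • e_{u∘π}`.
Since `ρₙ` is a product measure, `⟨e_v, e_w⟩_ρ = ∏ᵢ ρ̂(vᵢ - wᵢ)`, so the overlap equals
`(1/n!) Σ_{π,σ} sign π sign σ ∏ᵢ ρ̂(v_{π i} - w_{σ i})`. For fixed `π` the sum over `σ` is the
Leibniz expansion of the determinant of the row-permuted matrix, i.e. `sign π · det (ρ̂(vᵢ - wⱼ))`,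
and the `n!` equal terms cancel the prefactor. -/

theorem Matrix.sum_sign_mul_sign_mul_prod_eq_factorial_mul_det {ι R : Type*} [Fintype ι]
    [DecidableEq ι] [CommRing R] (M : Matrix ι ι R) :
    ∑ π : Equiv.Perm ι, ∑ σ : Equiv.Perm ι,
        (Equiv.Perm.sign π : R) * Equiv.Perm.sign σ * ∏ i, M (π i) (σ i)
      = (Fintype.card ι).factorial * M.det := by
  have row_sum (π : Equiv.Perm ι) :
      ∑ σ : Equiv.Perm ι, (Equiv.Perm.sign σ : R) * ∏ i, M (π i) (σ i)
        = Equiv.Perm.sign π * M.det := by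
    rw [← det_permute, ← det_transpose, det_apply']
    rfl
  have sign_mul_self (π : Equiv.Perm ι) : (Equiv.Perm.sign π : R) * Equiv.Perm.sign π = 1 := by
    rw [← Int.cast_mul, ← Units.val_mul, Int.units_mul_self, Units.val_one, Int.cast_one]
  simp_rw [mul_assoc, ← Finset.mul_sum, row_sum, ← mul_assoc, sign_mul_self, one_mul,
    Finset.sum_const, Finset.card_univ, Fintype.card_perm, nsmul_eq_mul]

theorem dotConf_comp_perm {n d : ℕ} (u x : Conf n d) (π : Equiv.Perm (Fin n)) :
    dotConf u (fun i => x (π i)) = dotConf (fun i => u (π⁻¹ i)) x :=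
  Fintype.sum_equiv π _ _ fun i => by simp

theorem antisym_planeWave {n d : ℕ} (u : Conf n d) :
    antisym (planeWave u) = fun x => ∑ π : Equiv.Perm (Fin n),
      ((Real.sqrt n.factorial : ℂ)⁻¹ * Equiv.Perm.sign π) * planeWave (fun i => u (π i)) x := by
  ext x
  rw [antisym, Finset.mul_sum]
  refine Fintype.sum_equiv (Equiv.inv _) _ _ fun π => ?_
  simp [planeWave, dotConf_comp_perm, mul_assoc]

theorem norm_planeWave {n d : ℕ} (u x : Conf n d) : ‖planeWave u x‖ = 1 := by
  simp [planeWave, Complex.norm_exp]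

theorem continuous_planeWave {n d : ℕ} (u : Conf n d) : Continuous (planeWave u) := by
  unfold planeWave dotConf
  fun_prop

theorem integrable_conj_planeWave_mul_planeWave {n d : ℕ} (ρ : Measure (Vec d))
    [IsFiniteMeasure ρ] (v w : Conf n d) :
    Integrable (fun x => starRingEnd ℂ (planeWave v x) * planeWave w x) (prodMeasure ρ n) := by
  rw [prodMeasure]
  refine Integrable.of_bound ?_ 1 (ae_of_all _ fun x => ?_)
  · exact ((continuous_conj.comp (continuous_planeWave v)).mul
      (continuous_planeWave w)).aestronglyMeasurable
  · simp [norm_planeWave]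

theorem conj_planeWave_mul_planeWave {n d : ℕ} (v w x : Conf n d) :
    starRingEnd ℂ (planeWave v x) * planeWave w x
      = ∏ i, Complex.exp (-(Complex.I * ((⟪v i - w i, x i⟫ : ℝ) : ℂ))) := by
  rw [planeWave, planeWave, ← Complex.exp_conj, ← Complex.exp_add, ← Complex.exp_sum]
  congr 1
  simp only [dotConf, map_sum, map_mul, Complex.conj_I, Complex.conj_ofReal, Complex.ofReal_sum,
    inner_sub_left, Complex.ofReal_sub, mul_sub, Finset.mul_sum, neg_mul]
  rw [← Finset.sum_add_distrib]
  exact Finset.sum_congr rfl fun i _ => by ring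

theorem innerProd_planeWave {n d : ℕ} (ρ : Measure (Vec d)) [SigmaFinite ρ] (v w : Conf n d) :
    innerProd ρ (planeWave v) (planeWave w) = ∏ i, ftMeasure ρ (v i - w i) := by
  simp_rw [innerProd, conj_planeWave_mul_planeWave, prodMeasure]
  exact integral_fintype_prod_eq_prod (μ := fun _ => ρ)
    fun i y => Complex.exp (-(Complex.I * ((⟪v i - w i, y⟫ : ℝ) : ℂ)))

theorem innerProd_sum_sum {n d : ℕ} {ι κ : Type*} [Fintype ι] [Fintype κ] (ρ : Measure (Vec d))
    (a : ι → ℂ) (b : κ → ℂ) (f : ι → Conf n d → ℂ) (g : κ → Conf n d → ℂ)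
    (hfg : ∀ i j, Integrable (fun x => starRingEnd ℂ (f i x) * g j x) (prodMeasure ρ n)) :
    innerProd ρ (fun x => ∑ i, a i * f i x) (fun x => ∑ j, b j * g j x)
      = ∑ i, ∑ j, starRingEnd ℂ (a i) * b j * innerProd ρ (f i) (g j) := by
  have expand (x : Conf n d) :
      starRingEnd ℂ (∑ i, a i * f i x) * ∑ j, b j * g j x
        = ∑ i, ∑ j, starRingEnd ℂ (a i) * b j * (starRingEnd ℂ (f i x) * g j x) := by
    simp only [map_sum, map_mul, Finset.sum_mul_sum]
    exact Finset.sum_congr rfl fun i _ => Finset.sum_congr rfl fun j _ => by ring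
  simp only [innerProd, expand]
  rw [integral_finsetSum _ fun i _ => integrable_finsetSum _ fun j _ => (hfg i j).const_mul _]
  refine Finset.sum_congr rfl fun i _ => ?_
  rw [integral_finsetSum _ fun j _ => (hfg i j).const_mul _]
  exact Finset.sum_congr rfl fun j _ => integral_const_mul _ _

theorem stmt2_general (n d : ℕ) (ρ : Measure (Vec d)) [IsProbabilityMeasure ρ]
    (v w : Conf n d) :
    innerProd ρ (antisym (planeWave v)) (antisym (planeWave w))
      = Matrix.det (Matrix.of fun i j : Fin n => ftMeasure ρ (v i - w j)) := by
  set c : ℂ := (Real.sqrt n.factorial : ℂ)⁻¹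
  have hc : c * c * n.factorial = 1 := by
    rw [← mul_inv, ← Complex.ofReal_mul, Real.mul_self_sqrt (Nat.cast_nonneg _),
      Complex.ofReal_natCast, inv_mul_cancel₀ (Nat.cast_ne_zero.mpr n.factorial_ne_zero)]
  rw [antisym_planeWave, antisym_planeWave, innerProd_sum_sum _ _ _ _ _
    fun π σ => integrable_conj_planeWave_mul_planeWave ρ _ _]
  simp only [innerProd_planeWave, map_mul, map_inv₀, Complex.conj_ofReal, map_intCast]
  calc _ = c * c * ∑ π : Equiv.Perm (Fin n), ∑ σ : Equiv.Perm (Fin n),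
          (Equiv.Perm.sign π : ℂ) * Equiv.Perm.sign σ * ∏ i, ftMeasure ρ (v (π i) - w (σ i)) := by
        simp_rw [Finset.mul_sum]
        exact Finset.sum_congr rfl fun π _ => Finset.sum_congr rfl fun σ _ => by ring
    _ = _ := by
        have leibniz :=
          sum_sign_mul_sign_mul_prod_eq_factorial_mul_det (of fun i j => ftMeasure ρ (v i - w j))
        simp only [of_apply, Fintype.card_fin] at leibniz
        rw [leibniz, ← mul_assoc, hc, one_mul]

/-- overlap of antisymmetrized plane waves equals the determinant of the
overlap matrix. -/
theorem stmt2 (n d : ℕ) (hn : 1 ≤ n) (ρ : Measure (Vec d)) [IsProbabilityMeasure ρ]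
    (v w : Conf n d) :
    innerProd ρ (antisym (planeWave v)) (antisym (planeWave w))
      = Matrix.det (Matrix.of fun i j : Fin n => ftMeasure ρ (v i - w j)) :=
  stmt2_general n d ρ v w

end
end

section
/- Let ρ be a probability measure on ℝ^d, n ≥ 2, and w ∈ (ℝ^d)^n. Then for all θ, θ̃ ∈ ℝ, | D_w(θ, θ̃) − Π_{i=1}^n ρ̂((θ − θ̃) w_i) | ≤ n! · G_ρ( δ_w · max(|θ|, |θ̃|) ). -/
open MeasureTheory Complex Matrix
open scoped BigOperators RealInnerProductSpace ENNReal NNReal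

noncomputable section

/-!
In the Leibniz expansion of `D_w(θ,θ̃)` the identity permutation contributes exactly
`∏ ρ̂((θ-θ̃)wᵢ)`. Every other permutation `σ` moves some index `i` for which `‖w_{σ i}‖` and
`‖wᵢ‖` are ordered like `|θ|` and `|θ̃|` (take `i` or `σ⁻¹ i` with `‖wᵢ‖` maximal among the
moved indices). For `‖b‖ ≤ ‖a‖` and `|t| ≤ 1` one has `2‖a - t b‖ ≥ min ‖a ± b‖`, so the factor
`ρ̂(θ w_{σ i} - θ̃ wᵢ)` has argument of norm at least `δ_w max(|θ|,|θ̃|)` and is bounded by `G_ρ`,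
while all other factors have modulus at most `1`.
-/

open Equiv

section Determinant

variable {ι : Type*} [Fintype ι] [DecidableEq ι]

theorem Matrix.det_sub_prod_diag {R : Type*} [CommRing R] (A : Matrix ι ι R) :
    A.det - ∏ i, A i i = ∑ σ ∈ Finset.univ.erase (1 : Perm ι), Perm.sign σ • ∏ i, A (σ i) i := by
  rw [det_apply, ← Finset.add_sum_erase _ _ (Finset.mem_univ 1)]
  simp

theorem Matrix.norm_det_sub_prod_diag_le {R : Type*} [NormedCommRing R]
    (A : Matrix ι ι R) {c : ℝ}
    (hc : ∀ σ : Perm ι, σ ≠ 1 → ‖∏ i, A (σ i) i‖ ≤ c) :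
    ‖A.det - ∏ i, A i i‖ ≤ ((Fintype.card ι).factorial - 1 : ℝ) * c := by
  have hterm : ∀ σ ∈ Finset.univ.erase (1 : Perm ι), ‖Perm.sign σ • ∏ i, A (σ i) i‖ ≤ c := by
    intro σ hσ
    rcases Int.units_eq_one_or (Perm.sign σ) with h | h <;>
      simpa [h] using hc σ (Finset.ne_of_mem_erase hσ)
  have hcard : ((Finset.univ.erase (1 : Perm ι)).card : ℝ) = (Fintype.card ι).factorial - 1 := by
    rw [Finset.card_erase_of_mem (Finset.mem_univ _), Finset.card_univ, Fintype.card_perm,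
      Nat.cast_sub (Nat.one_le_iff_ne_zero.2 (Nat.factorial_ne_zero _)), Nat.cast_one]
  rw [det_sub_prod_diag, ← hcard, ← nsmul_eq_mul]
  exact (norm_sum_le _ _).trans (Finset.sum_le_card_nsmul _ _ _ hterm)

end Determinant

theorem Equiv.Perm.exists_apply_ne_and_apply_le {α β : Type*} [Fintype α] [DecidableEq α]
    [LinearOrder β] {σ : Perm α} (hσ : σ ≠ 1) (f : α → β) : ∃ i, σ i ≠ i ∧ f (σ i) ≤ f i := by
  have hne : σ.support.Nonempty :=
    Finset.nonempty_iff_ne_empty.2 (mt Perm.support_eq_empty_iff.1 hσ)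
  obtain ⟨i, hi, hmax⟩ := Finset.exists_max_image σ.support f hne
  exact ⟨i, Perm.mem_support.1 hi, hmax _ (Perm.apply_mem_support.2 hi)⟩

theorem Equiv.Perm.exists_apply_ne_and_le_apply {α β : Type*} [Fintype α] [DecidableEq α]
    [LinearOrder β] {σ : Perm α} (hσ : σ ≠ 1) (f : α → β) : ∃ i, σ i ≠ i ∧ f i ≤ f (σ i) := by
  obtain ⟨j, hj, hle⟩ := exists_apply_ne_and_apply_le (inv_ne_one.2 hσ) f
  exact ⟨σ⁻¹ j, by simpa [eq_comm] using hj, by simpa using hle⟩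

theorem norm_prod_le_of_norm_le_one {ι R : Type*} [Fintype ι] [NormedCommRing R] [NormOneClass R]
    {f : ι → R} (hf : ∀ i, ‖f i‖ ≤ 1) {i₀ : ι} {c : ℝ} (hi₀ : ‖f i₀‖ ≤ c) : ‖∏ i, f i‖ ≤ c := by
  classical
  rw [← Finset.mul_prod_erase _ _ (Finset.mem_univ i₀)]
  calc ‖f i₀ * ∏ i ∈ Finset.univ.erase i₀, f i‖
      ≤ ‖f i₀‖ * ∏ i ∈ Finset.univ.erase i₀, ‖f i‖ :=
        (norm_mul_le _ _).trans (mul_le_mul_of_nonneg_left (Finset.norm_prod_le _ _)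
          (norm_nonneg _))
    _ ≤ c * 1 :=
        mul_le_mul hi₀ (Finset.prod_le_one (fun _ _ => norm_nonneg _) fun i _ => hf i)
          (Finset.prod_nonneg fun _ _ => norm_nonneg _) ((norm_nonneg _).trans hi₀)
    _ = c := mul_one c

section Geometry

variable {E : Type*} [NormedAddCommGroup E] [InnerProductSpace ℝ E]

theorem norm_sub_le_two_mul_norm_sub_smul_of_inner_nonneg {a b : E} {t : ℝ} (ht : t ≤ 1)
    (hba : ‖b‖ ≤ ‖a‖) (hab : 0 ≤ ⟪a, b⟫) : ‖a - b‖ ≤ 2 * ‖a - t • b‖ := by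
  have hsub : ‖a - b‖ ^ 2 = ‖a‖ ^ 2 - 2 * ⟪a, b⟫ + ‖b‖ ^ 2 := norm_sub_sq_real a b
  have hsub_smul : ‖a - t • b‖ ^ 2 = ‖a‖ ^ 2 - 2 * (t * ⟪a, b⟫) + t ^ 2 * ‖b‖ ^ 2 := by
    rw [norm_sub_sq_real, real_inner_smul_right, norm_smul, Real.norm_eq_abs, mul_pow, sq_abs]
  have hcs : ⟪a, b⟫ ≤ ‖a‖ * ‖b‖ := real_inner_le_norm a b
  have ha := norm_nonneg a
  have hb := norm_nonneg b
  have hsq : ‖a - b‖ ^ 2 ≤ (2 * ‖a - t • b‖) ^ 2 := by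
    rcases le_or_gt ⟪a, b⟫ (‖b‖ ^ 2) with h | h
    · nlinarith [mul_nonneg hab (sq_nonneg (t - 1)), mul_nonneg (sub_nonneg.2 h) (sq_nonneg t),
        sq_nonneg (‖a‖ - ‖b‖), mul_nonneg hb ha]
    · nlinarith [mul_nonneg (sub_nonneg.2 ht)
        (show 0 ≤ 2 * ⟪a, b⟫ - ‖b‖ ^ 2 * (1 + t) by nlinarith),
        sq_nonneg (‖a‖ - ‖b‖), mul_nonneg hb ha]
  exact (pow_le_pow_iff_left₀ (norm_nonneg _) (by positivity) two_ne_zero).1 hsq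

theorem min_norm_add_norm_sub_le_two_mul_norm_sub_smul {a b : E} {t : ℝ} (ht : |t| ≤ 1)
    (hba : ‖b‖ ≤ ‖a‖) : min ‖a + b‖ ‖a - b‖ ≤ 2 * ‖a - t • b‖ := by
  rcases le_or_gt 0 ⟪a, b⟫ with hab | hab
  · exact (min_le_right _ _).trans
      (norm_sub_le_two_mul_norm_sub_smul_of_inner_nonneg (le_of_abs_le ht) hba hab)
  · have h := norm_sub_le_two_mul_norm_sub_smul_of_inner_nonneg (a := a) (b := -b) (t := -t)
      (neg_le.1 (neg_le_of_abs_le ht)) (by rwa [norm_neg]) (by rw [inner_neg_right]; linarith)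
    rw [sub_neg_eq_add, neg_smul_neg] at h
    exact (min_le_left _ _).trans h

end Geometry

section Separation

variable {n d : ℕ}

theorem two_mul_sep_le (w : Conf n d) {i j : Fin n} (hij : i ≠ j) :
    2 * sep w ≤ min ‖w i + w j‖ ‖w i - w j‖ := by
  have hbdd : BddBelow (Set.range fun p : {p : Fin n × Fin n // p.1 < p.2} =>
      min ‖w p.1.1 + w p.1.2‖ ‖w p.1.1 - w p.1.2‖) := (Set.finite_range _).bddBelow
  rcases hij.lt_or_gt with h | h
  · have := ciInf_le hbdd ⟨(i, j), h⟩
    rw [sep]; linarith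
  · have := ciInf_le hbdd ⟨(j, i), h⟩
    rw [add_comm (w j), norm_sub_rev (w j)] at this
    rw [sep]; linarith

theorem sep_mul_max_le_norm_smul_sub_smul (w : Conf n d) {i j : Fin n} (hij : i ≠ j)
    {θ θ' : ℝ} (hθ : |θ'| ≤ |θ|) (hw : ‖w j‖ ≤ ‖w i‖) :
    sep w * max |θ| |θ'| ≤ ‖θ • w i - θ' • w j‖ := by
  rw [max_eq_left hθ]
  rcases eq_or_ne θ 0 with rfl | hθ0
  · simp
  have ht : |θ' / θ| ≤ 1 := by rwa [abs_div, div_le_one (abs_pos.2 hθ0)]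
  have hfactor : θ • w i - θ' • w j = θ • (w i - (θ' / θ) • w j) := by
    rw [smul_sub, smul_smul, mul_div_cancel₀ _ hθ0]
  have hsep : sep w ≤ ‖w i - (θ' / θ) • w j‖ := by
    linarith [two_mul_sep_le w hij, min_norm_add_norm_sub_le_two_mul_norm_sub_smul ht hw]
  rw [hfactor, norm_smul, Real.norm_eq_abs, mul_comm]
  exact mul_le_mul_of_nonneg_left hsep (abs_nonneg θ)

end Separation

section FourierTransform

variable {d : ℕ} (ρ : Measure (Vec d))

theorem norm_ftMeasure_le_one [IsProbabilityMeasure ρ] (v : Vec d) : ‖ftMeasure ρ v‖ ≤ 1 := by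
  simpa [ftMeasure] using norm_integral_le_of_norm_le_const (μ := ρ) (C := 1)
    (Filter.Eventually.of_forall fun x => by simp [Complex.norm_exp])

theorem norm_ftMeasure_le_Gtail [IsProbabilityMeasure ρ] {t : ℝ} {y : Vec d} (hy : t ≤ ‖y‖) :
    ‖ftMeasure ρ y‖ ≤ Gtail ρ t :=
  le_csSup ⟨1, by rintro r ⟨y, -, rfl⟩; exact norm_ftMeasure_le_one ρ y⟩ ⟨y, hy, rfl⟩

theorem Gtail_nonneg (t : ℝ) : 0 ≤ Gtail ρ t :=
  Real.sSup_nonneg (by rintro r ⟨y, -, rfl⟩; exact norm_nonneg _)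

end FourierTransform

theorem norm_prod_ftMeasure_perm_le_Gtail {n d : ℕ} (ρ : Measure (Vec d))
    [IsProbabilityMeasure ρ] (w : Conf n d) (θ θ' : ℝ) {σ : Perm (Fin n)} (hσ : σ ≠ 1) :
    ‖∏ i, ftMeasure ρ (θ • w (σ i) - θ' • w i)‖ ≤ Gtail ρ (sep w * max |θ| |θ'|) := by
  suffices ∃ i, sep w * max |θ| |θ'| ≤ ‖θ • w (σ i) - θ' • w i‖ by
    obtain ⟨i, hi⟩ := this
    exact norm_prod_le_of_norm_le_one (fun _ => norm_ftMeasure_le_one ρ _)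
      (norm_ftMeasure_le_Gtail ρ hi)
  rcases le_total |θ'| |θ| with hθ | hθ
  · obtain ⟨i, hi, hw⟩ := Perm.exists_apply_ne_and_le_apply hσ fun i => ‖w i‖
    exact ⟨i, sep_mul_max_le_norm_smul_sub_smul w hi hθ hw⟩
  · obtain ⟨i, hi, hw⟩ := Perm.exists_apply_ne_and_apply_le hσ fun i => ‖w i‖
    refine ⟨i, ?_⟩
    rw [norm_sub_rev, max_comm]
    exact sep_mul_max_le_norm_smul_sub_smul w hi.symm hθ hw

theorem stmt5_general (n d : ℕ) (ρ : Measure (Vec d)) [IsProbabilityMeasure ρ]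
    (w : Conf n d) (θ θ' : ℝ) :
    ‖Dker ρ w θ θ' - ∏ i : Fin n, ftMeasure ρ ((θ - θ') • w i)‖
      ≤ (Nat.factorial n : ℝ) * Gtail ρ (sep w * max |θ| |θ'|) := by
  set A := Matrix.of fun i j : Fin n => ftMeasure ρ (θ • w i - θ' • w j)
  have hdiag : ∏ i, ftMeasure ρ ((θ - θ') • w i) = ∏ i, A i i := by simp [A, sub_smul]
  have hbound := A.norm_det_sub_prod_diag_le fun σ hσ =>
    norm_prod_ftMeasure_perm_le_Gtail ρ w θ θ' hσ
  rw [Fintype.card_fin] at hbound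
  rw [Dker, hdiag]
  linarith [Gtail_nonneg ρ (sep w * max |θ| |θ'|)]

/-- the overlap kernel is close to the product `Π ρ̂((θ-θ̃)wᵢ)`, up to
`n!·G_ρ(δ_w·max(|θ|,|θ̃|))`. -/
theorem stmt5 (n d : ℕ) (hn : 2 ≤ n) (ρ : Measure (Vec d)) [IsProbabilityMeasure ρ]
    (w : Conf n d) (θ θ' : ℝ) :
    ‖Dker ρ w θ θ' - ∏ i : Fin n, ftMeasure ρ ((θ - θ') • w i)‖
      ≤ (Nat.factorial n : ℝ) * Gtail ρ (sep w * max |θ| |θ'|) :=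
  stmt5_general n d ρ w θ θ'

end
end

section
/- Let n ≥ 2, d ≥ 1, and w ∈ (ℝ^d)^n. Then for every real number θ̃ and every permutation π of {1,…,n} with π ≠ identity, one has max_{1 ≤ i ≤ n} ‖w_i − θ̃ · w_{π(i)}‖ ≥ δ_w. -/
open MeasureTheory Complex Matrix
open scoped BigOperators RealInnerProductSpace ENNReal NNReal

noncomputable section

/-!
Among the points moved by `π` pick `i` with `‖w i‖` largest. If `|θ̃| ≤ 1`, the term at `i` is
`‖w i - θ̃ w (π i)‖`; if `|θ̃| > 1`, the term at `π⁻¹ i` is at least `‖w i - θ̃⁻¹ w (π⁻¹ i)‖`.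
Either way it has the form `‖u - s v‖` with `‖v‖ ≤ ‖u‖` and `|s| ≤ 1`. Replacing `s` by its sign
`±1` costs at most `(1 - |s|) ‖v‖`, while `‖u - s v‖ ≥ ‖u‖ - |s| ‖v‖ ≥ (1 - |s|) ‖v‖`; hence
`‖u ∓ v‖ ≤ 2 ‖u - s v‖`, and `‖u ∓ v‖ ≥ 2 δ_w` because `i` and its neighbour are distinct.
-/

section NormedSpace

variable {E : Type*} [SeminormedAddCommGroup E] [NormedSpace ℝ E]

theorem norm_sub_le_two_mul_norm_sub_smul {u v : E} (hvu : ‖v‖ ≤ ‖u‖) {s : ℝ}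
    (hs₀ : 0 ≤ s) (hs₁ : s ≤ 1) : ‖u - v‖ ≤ 2 * ‖u - s • v‖ := by
  have hfar : ‖u - v‖ ≤ ‖u - s • v‖ + (1 - s) * ‖v‖ := by
    calc ‖u - v‖ = ‖(u - s • v) - (1 - s) • v‖ := by
          rw [sub_smul, one_smul, sub_sub_sub_cancel_right]
      _ ≤ ‖u - s • v‖ + ‖(1 - s) • v‖ := norm_sub_le _ _
      _ = ‖u - s • v‖ + (1 - s) * ‖v‖ := by
        rw [norm_smul, Real.norm_of_nonneg (sub_nonneg.2 hs₁)]
  have hnear : ‖u‖ - s * ‖v‖ ≤ ‖u - s • v‖ := by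
    simpa [norm_smul, abs_of_nonneg hs₀] using norm_sub_norm_le u (s • v)
  linarith

theorem min_norm_add_norm_sub_le_two_mul_norm_sub_smul_s6 {u v : E} (hvu : ‖v‖ ≤ ‖u‖) {s : ℝ}
    (hs : |s| ≤ 1) : min ‖u + v‖ ‖u - v‖ ≤ 2 * ‖u - s • v‖ := by
  rcases le_total 0 s with hs₀ | hs₀
  · exact (min_le_right _ _).trans
      (norm_sub_le_two_mul_norm_sub_smul hvu hs₀ ((le_abs_self s).trans hs))
  · have h := norm_sub_le_two_mul_norm_sub_smul (u := u) (v := -v) (by rwa [norm_neg])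
      (neg_nonneg.2 hs₀) ((neg_le_abs s).trans hs)
    rw [sub_neg_eq_add, neg_smul_neg] at h
    exact (min_le_left _ _).trans h

theorem norm_sub_inv_smul_le_norm_sub_smul (u v : E) {θ : ℝ} (hθ : 1 ≤ |θ|) :
    ‖u - θ⁻¹ • v‖ ≤ ‖v - θ • u‖ := by
  have hθ₀ : θ ≠ 0 := abs_pos.1 (one_pos.trans_le hθ)
  have h : v - θ • u = θ • (θ⁻¹ • v - u) := by
    rw [smul_sub, smul_inv_smul₀ hθ₀]
  rw [h, norm_smul, Real.norm_eq_abs, norm_sub_rev]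
  exact le_mul_of_one_le_left (norm_nonneg _) hθ

end NormedSpace

theorem sep_le_half_min {n d : ℕ} (w : Conf n d) {i j : Fin n} (hij : i ≠ j) :
    sep w ≤ 1 / 2 * min ‖w i + w j‖ ‖w i - w j‖ := by
  have hbdd : BddBelow (Set.range fun p : {p : Fin n × Fin n // p.1 < p.2} =>
      min ‖w p.1.1 + w p.1.2‖ ‖w p.1.1 - w p.1.2‖) :=
    ⟨0, by rintro _ ⟨p, rfl⟩; positivity⟩
  rcases hij.lt_or_gt with h | h
  · exact mul_le_mul_of_nonneg_left (ciInf_le hbdd ⟨(i, j), h⟩) (by norm_num)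
  · have := mul_le_mul_of_nonneg_left (ciInf_le hbdd ⟨(j, i), h⟩) (by norm_num : (0 : ℝ) ≤ 1 / 2)
    rwa [add_comm, norm_sub_rev] at this

theorem sep_le_norm_sub_smul {n d : ℕ} (w : Conf n d) {i j : Fin n} (hij : i ≠ j)
    (hji : ‖w j‖ ≤ ‖w i‖) {s : ℝ} (hs : |s| ≤ 1) : sep w ≤ ‖w i - s • w j‖ := by
  have := min_norm_add_norm_sub_le_two_mul_norm_sub_smul_s6 hji hs
  linarith [sep_le_half_min w hij]

theorem stmt6_general (n d : ℕ) (w : Conf n d)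
    (θ' : ℝ) (π : Equiv.Perm (Fin n)) (hπ : π ≠ 1) :
    sep w ≤ ⨆ i : Fin n, ‖w i - θ' • w (π i)‖ := by
  classical
  obtain ⟨i, hi, hmax⟩ := π.support.exists_max_image (fun i => ‖w i‖)
    (Finset.nonempty_iff_ne_empty.2 (mt Equiv.Perm.support_eq_empty_iff.1 hπ))
  have hbdd : BddAbove (Set.range fun i => ‖w i - θ' • w (π i)‖) := (Set.finite_range _).bddAbove
  rcases le_or_gt |θ'| 1 with hθ | hθ
  · calc sep w ≤ ‖w i - θ' • w (π i)‖ :=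
          sep_le_norm_sub_smul w (Ne.symm (Equiv.Perm.mem_support.1 hi))
            (hmax _ (Equiv.Perm.apply_mem_support.2 hi)) hθ
      _ ≤ _ := le_ciSup hbdd i
  · obtain ⟨k, rfl⟩ := π.surjective i
    calc sep w ≤ ‖w (π k) - θ'⁻¹ • w k‖ :=
          sep_le_norm_sub_smul w (Equiv.Perm.mem_support.1 (Equiv.Perm.apply_mem_support.1 hi))
            (hmax _ (Equiv.Perm.apply_mem_support.1 hi))
            (by rw [abs_inv]; exact inv_le_one_of_one_le₀ hθ.le)
      _ ≤ ‖w k - θ' • w (π k)‖ := norm_sub_inv_smul_le_norm_sub_smul _ _ hθ.le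
      _ ≤ _ := le_ciSup hbdd k

/-- for every `θ̃` and every nontrivial permutation `π`,
`max_i ‖wᵢ - θ̃·w_{π(i)}‖ ≥ δ_w`. -/
theorem stmt6 (n d : ℕ) (hn : 2 ≤ n) (hd : 1 ≤ d) (w : Conf n d)
    (θ' : ℝ) (π : Equiv.Perm (Fin n)) (hπ : π ≠ 1) :
    sep w ≤ ⨆ i : Fin n, ‖w i - θ' • w (π i)‖ :=
  stmt6_general n d w θ' π hπ

end
end

section
/- Let n, d ≥ 1, w ∈ (ℝ^d)^n, and θ, θ̃ ∈ ℝ with θ·θ̃ ≠ 0, and let s ∈ {+1, −1} be the sign of θ·θ̃. Then D^N_w(θ, θ̃) = exp(−(‖w‖²/2)(|θ| − |θ̃|)²) · D^N_w( √(|θ θ̃|), s·√(|θ θ̃|) ). -/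
/-! Expanding the square, `‖θ x - θ' y‖²` depends on `θ, θ'` only through `θ²`, `θ'²` and the
product `θ θ'`. Replacing `(θ, θ')` by `(a, s a)` with `a = √|θ θ'|` keeps the product, so the
entries of the two Gaussian matrices differ by a factor `uᵢ vⱼ`; such row and column scalings
multiply the determinant by `∏ uᵢ ∏ vⱼ`, which here is the Gaussian prefactor in `‖w‖`. -/

open MeasureTheory Complex Matrix
open scoped BigOperators RealInnerProductSpace ENNReal NNReal

noncomputable section

theorem Real.sign_mul_abs (r : ℝ) : Real.sign r * |r| = r := by
  rcases lt_trichotomy r 0 with h | rfl | h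
  · rw [Real.sign_of_neg h, abs_of_neg h]; ring
  · simp
  · rw [Real.sign_of_pos h, abs_of_pos h, one_mul]

theorem Real.sign_sq_of_ne_zero {r : ℝ} (h : r ≠ 0) : Real.sign r ^ 2 = 1 := by
  rcases Real.sign_apply_eq_of_ne_zero r h with h' | h' <;> rw [h'] <;> norm_num

theorem Matrix.det_of_mul_mul {ι R : Type*} [Fintype ι] [DecidableEq ι] [CommRing R]
    (u v : ι → R) (A : ι → ι → R) :
    det (of fun i j => u i * A i j * v j) = (∏ i, u i) * (∏ i, v i) * det (of A) := by
  have h : (of fun i j => u i * A i j * v j) =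
      of fun i j => u i * (of fun i j => v j * of A i j) i j := by
    ext i j; simp only [of_apply]; ring
  rw [h, det_mul_column, det_mul_row, mul_assoc]

theorem norm_smul_sub_smul_sq_of_mul_eq {E : Type*} [NormedAddCommGroup E] [InnerProductSpace ℝ E]
    {α β γ δ : ℝ} (h : γ * δ = α * β) (x y : E) :
    ‖α • x - β • y‖ ^ 2 =
      (α ^ 2 - γ ^ 2) * ‖x‖ ^ 2 + ‖γ • x - δ • y‖ ^ 2 + (β ^ 2 - δ ^ 2) * ‖y‖ ^ 2 := by
  simp only [norm_sub_sq_real, norm_smul, real_inner_smul_left, real_inner_smul_right, mul_pow,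
    Real.norm_eq_abs, sq_abs]
  linear_combination 2 * ⟪x, y⟫ * h

theorem DN_eq_exp_mul_DN_of_mul_eq {n d : ℕ} (w : Conf n d) {θ θ' γ δ : ℝ}
    (h : γ * δ = θ * θ') :
    DN w θ θ' = Real.exp (-(confNorm w ^ 2 / 2) * (θ ^ 2 + θ' ^ 2 - γ ^ 2 - δ ^ 2)) * DN w γ δ := by
  have hentry : ∀ i j, Real.exp (-‖θ • w i - θ' • w j‖ ^ 2 / 2) =
      Real.exp (-(θ ^ 2 - γ ^ 2) * ‖w i‖ ^ 2 / 2) * Real.exp (-‖γ • w i - δ • w j‖ ^ 2 / 2) *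
        Real.exp (-(θ' ^ 2 - δ ^ 2) * ‖w j‖ ^ 2 / 2) := by
    intro i j
    rw [← Real.exp_add, ← Real.exp_add, norm_smul_sub_smul_sq_of_mul_eq h]
    ring_nf
  have hconf : confNorm w ^ 2 = ∑ i, ‖w i‖ ^ 2 :=
    Real.sq_sqrt (Finset.sum_nonneg fun i _ => sq_nonneg _)
  simp only [DN, hentry, det_of_mul_mul]
  rw [← Real.exp_sum, ← Real.exp_sum, ← Real.exp_add, ← Finset.sum_add_distrib, hconf,
    Finset.sum_div, neg_mul, Finset.sum_mul, ← Finset.sum_neg_distrib]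
  congr 2
  exact Finset.sum_congr rfl fun i _ => by ring

theorem stmt10_general (n d : ℕ) (w : Conf n d)
    (θ θ' : ℝ) (hθ : θ * θ' ≠ 0) (s : ℝ) (hs : s = Real.sign (θ * θ')) :
    DN w θ θ' = Real.exp (-(confNorm w ^ 2 / 2) * (|θ| - |θ'|) ^ 2) *
      DN w (Real.sqrt |θ * θ'|) (s * Real.sqrt |θ * θ'|) := by
  have ha : Real.sqrt |θ * θ'| ^ 2 = |θ * θ'| := Real.sq_sqrt (abs_nonneg _)
  have hprod : Real.sqrt |θ * θ'| * (s * Real.sqrt |θ * θ'|) = θ * θ' := by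
    rw [mul_left_comm, ← sq, ha, hs, Real.sign_mul_abs]
  have hs2 : s ^ 2 = 1 := hs ▸ Real.sign_sq_of_ne_zero hθ
  rw [DN_eq_exp_mul_DN_of_mul_eq w hprod, mul_pow, hs2, ha, abs_mul]
  congr 3
  rw [← sq_abs θ, ← sq_abs θ']
  ring

/-- the Gaussian overlap kernel is determined by its values on the
diagonal and anti-diagonal via a Gaussian factor. -/
theorem stmt10 (n d : ℕ) (hn : 1 ≤ n) (hd : 1 ≤ d) (w : Conf n d)
    (θ θ' : ℝ) (hθ : θ * θ' ≠ 0) (s : ℝ) (hs : s = Real.sign (θ * θ')) :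
    DN w θ θ' = Real.exp (-(confNorm w ^ 2 / 2) * (|θ| - |θ'|) ^ 2) *
      DN w (Real.sqrt |θ * θ'|) (s * Real.sqrt |θ * θ'|) :=
  stmt10_general n d w θ θ' hθ s hs

end
end

section
/- Let n, d ≥ 1 and w ∈ (ℝ^d)^n. Then for all θ, θ̃ ∈ ℝ, |D^N_w(θ, θ̃)| ≤ exp(−(‖w‖²/2)(|θ| − |θ̃|)²). -/
open MeasureTheory Complex Matrix
open scoped BigOperators RealInnerProductSpace ENNReal NNReal

noncomputable section

/-! With `G` the Gram matrix of `w` and `s = θθ'`, expanding the square gives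
`D^N_w(θ,θ') = ∏ᵢ exp(-(θ² + θ'²)‖wᵢ‖²/2) · det (exp (s Gᵢⱼ))`. The Taylor coefficients of
`exp (|s| g) ± exp (s g)` are nonnegative, so by the Schur product theorem both entrywise
matrices `exp (|s| G) ± exp (s G)` are positive semidefinite. A sandwich `-A ≤ B ≤ A` bounds
`|det B|` by `∏ Aᵢᵢ = exp (|s| ∑ ‖wᵢ‖²)`, and `θ² + θ'² - 2|θθ'| = (|θ| - |θ'|)²`. -/

theorem Real.prod_le_one_of_sum_le_card {ι : Type*} [Fintype ι] {δ : ι → ℝ} (hδ : ∀ i, 0 ≤ δ i)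
    (hsum : ∑ i, δ i ≤ Fintype.card ι) : ∏ i, δ i ≤ 1 :=
  calc ∏ i, δ i ≤ ∏ i, Real.exp (δ i - 1) :=
        Finset.prod_le_prod (fun i _ => hδ i) fun i _ => by linarith [Real.add_one_le_exp (δ i - 1)]
    _ = Real.exp (∑ i, δ i - Fintype.card ι) := by simp [← Real.exp_sum]
    _ ≤ 1 := Real.exp_le_one_iff.mpr (by linarith)

namespace Matrix

variable {ι : Type*} [Fintype ι]

theorem PosSemidef.of_hasSum {β : Type*} {f : β → Matrix ι ι ℝ} {M : Matrix ι ι ℝ}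
    (hf : HasSum f M) (hpos : ∀ k, (f k).PosSemidef) : M.PosSemidef := by
  refine .of_dotProduct_mulVec_nonneg ?_ fun x => ?_
  · have hstar := hf.matrix_conjTranspose
    simp only [fun k => (hpos k).isHermitian.eq] at hstar
    exact hstar.unique hf
  · let Q : Matrix ι ι ℝ →+ ℝ :=
      { toFun := fun N => star x ⬝ᵥ N *ᵥ x
        map_zero' := by simp
        map_add' := fun _ _ => by simp [add_mulVec, dotProduct_add] }
    have hQ : Continuous Q := by
      show Continuous fun N : Matrix ι ι ℝ => star x ⬝ᵥ N *ᵥ x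
      fun_prop
    exact (hf.map Q hQ).nonneg fun k => (hpos k).dotProduct_mulVec_nonneg x

open scoped ComplexOrder in
theorem PosSemidef.map_pow {𝕜 : Type*} [RCLike 𝕜] {G : Matrix ι ι 𝕜} (hG : G.PosSemidef)
    (k : ℕ) : (G.map (· ^ k)).PosSemidef := by
  induction k with
  | zero =>
    convert posSemidef_vecMulVec_self_star (1 : ι → 𝕜) using 1
    ext i j
    simp [vecMulVec]
  | succ k ih =>
    convert ih.hadamard hG using 1
    ext i j
    simp [pow_succ]

theorem PosSemidef.map_of_hasSum_pow {G : Matrix ι ι ℝ} (hG : G.PosSemidef) {c : ℕ → ℝ}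
    (hc : ∀ k, 0 ≤ c k) {φ : ℝ → ℝ} (hφ : ∀ g, HasSum (fun k => c k * g ^ k) (φ g)) :
    (G.map φ).PosSemidef :=
  .of_hasSum (f := fun k => c k • G.map (· ^ k))
    (Pi.hasSum.mpr fun i => Pi.hasSum.mpr fun j => hφ (G i j))
    fun k => (hG.map_pow k).smul (hc k)

theorem PosSemidef.map_exp_add_mul_exp {G : Matrix ι ι ℝ} (hG : G.PosSemidef) {a b σ : ℝ}
    (hab : |b| ≤ a) (hσ : |σ| ≤ 1) :
    (G.map fun g => Real.exp (a * g) + σ * Real.exp (b * g)).PosSemidef := by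
  have hexp (x : ℝ) : HasSum (fun k => x ^ k / k.factorial) (Real.exp x) :=
    Real.exp_eq_exp_ℝ ▸ NormedSpace.expSeries_div_hasSum_exp x
  refine hG.map_of_hasSum_pow (c := fun k => (a ^ k + σ * b ^ k) / k.factorial)
    (fun k => div_nonneg ?_ (Nat.cast_nonneg _)) fun g => ?_
  · have hterm : |σ * b ^ k| ≤ a ^ k := by
      rw [abs_mul, abs_pow]
      exact (mul_le_of_le_one_left (by positivity) hσ).trans
        (pow_le_pow_left₀ (abs_nonneg b) hab k)
    linarith [neg_abs_le (σ * b ^ k)]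
  · convert (hexp (a * g)).add ((hexp (b * g)).mul_left σ) using 1
    ext k
    ring

/-- In an eigenbasis of `B`, the constraint `-A ≤ B ≤ A` bounds each eigenvalue of `B` by the
corresponding diagonal entry of `A`, whose sum is `tr A = card ι`; conclude by AM-GM. -/
theorem abs_det_le_one_of_posSemidef_sub_of_posSemidef_add [DecidableEq ι]
    {A B : Matrix ι ι ℝ} (hB : B.IsHermitian) (hsub : (A - B).PosSemidef)
    (hadd : (A + B).PosSemidef) (hA : ∀ i, A i i = 1) : |B.det| ≤ 1 := by
  set V : Matrix ι ι ℝ := (hB.eigenvectorUnitary : Matrix ι ι ℝ)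
  set ν := hB.eigenvalues
  have hBV : Vᴴ * B * V = diagonal ν := by
    simpa [V, star_eq_conjTranspose] using hB.conjStarAlgAut_star_eigenvectorUnitary
  set δ : ι → ℝ := fun i => (Vᴴ * A * V) i i
  have hν (i : ι) : |ν i| ≤ δ i := by
    have h₁ := (hsub.conjTranspose_mul_mul_same V).diag_nonneg (i := i)
    have h₂ := (hadd.conjTranspose_mul_mul_same V).diag_nonneg (i := i)
    rw [mul_sub, sub_mul, hBV] at h₁
    rw [mul_add, add_mul, hBV] at h₂
    simp only [sub_apply, add_apply, diagonal_apply_eq] at h₁ h₂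
    exact abs_le.mpr ⟨by linarith, by linarith⟩
  have htrace : ∑ i, δ i = Fintype.card ι := by
    have hVV : V * Vᴴ = 1 := by
      simpa [V, star_eq_conjTranspose] using Unitary.mul_star_self_of_mem hB.eigenvectorUnitary.2
    calc ∑ i, δ i = trace (Vᴴ * A * V) := rfl
      _ = Fintype.card ι := by rw [trace_mul_cycle, hVV, one_mul]; simp [trace, hA]
  calc |B.det| = ∏ i, |ν i| := by rw [hB.det_eq_prod_eigenvalues, Finset.abs_prod]; rfl
    _ ≤ ∏ i, δ i := Finset.prod_le_prod (fun i _ => abs_nonneg _) fun i _ => hν i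
    _ ≤ 1 := Real.prod_le_one_of_sum_le_card (fun i => (abs_nonneg _).trans (hν i)) htrace.le

/-- For `B = A` this is Hadamard's inequality. -/
theorem abs_det_le_prod_diag_of_posSemidef_sub_of_posSemidef_add [DecidableEq ι]
    {A B : Matrix ι ι ℝ} (hB : B.IsHermitian) (hsub : (A - B).PosSemidef)
    (hadd : (A + B).PosSemidef) (hA : ∀ i, 0 < A i i) : |B.det| ≤ ∏ i, A i i := by
  set D : Matrix ι ι ℝ := diagonal fun i => (√(A i i))⁻¹
  have hunit := abs_det_le_one_of_posSemidef_sub_of_posSemidef_add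
    (isHermitian_conjTranspose_mul_mul D hB)
    (by simpa only [mul_sub, sub_mul] using hsub.conjTranspose_mul_mul_same D)
    (by simpa only [mul_add, add_mul] using hadd.conjTranspose_mul_mul_same D)
    fun i => by
      have hpos := Real.sqrt_pos.mpr (hA i)
      simp only [D, diagonal_conjTranspose, mul_diagonal, diagonal_mul, star_trivial]
      field_simp
      exact (Real.sq_sqrt (hA i).le).symm
  have hdet : (Dᴴ * B * D).det = B.det / ∏ i, A i i := by
    simp only [D, det_mul, det_conjTranspose, det_diagonal, star_trivial, Finset.prod_inv_distrib]
    rw [← Finset.prod_congr rfl fun i _ => Real.mul_self_sqrt (hA i).le, Finset.prod_mul_distrib]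
    ring
  have hprod : 0 < ∏ i, A i i := Finset.prod_pos fun i _ => hA i
  rw [hdet, abs_div, abs_of_pos hprod, div_le_one hprod] at hunit
  exact hunit

end Matrix

theorem abs_det_map_exp_gram_le {ι E : Type*} [Fintype ι] [DecidableEq ι]
    [NormedAddCommGroup E] [InnerProductSpace ℝ E] (v : ι → E) (s : ℝ) :
    |((gram ℝ v).map fun g => Real.exp (s * g)).det| ≤ ∏ i, Real.exp (|s| * ‖v i‖ ^ 2) := by
  have hG := posSemidef_gram ℝ v
  set B := (gram ℝ v).map fun g => Real.exp (s * g)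
  set A := (gram ℝ v).map fun g => Real.exp (|s| * g)
  have hsub : (A - B).PosSemidef := by
    convert hG.map_exp_add_mul_exp (le_refl |s|) (σ := -1) (by norm_num) using 1
    ext
    simp [A, B, sub_eq_add_neg]
  have hadd : (A + B).PosSemidef := by
    convert hG.map_exp_add_mul_exp (le_refl |s|) (σ := 1) (by norm_num) using 1
    ext
    simp [A, B]
  calc |B.det| ≤ ∏ i, A i i :=
        abs_det_le_prod_diag_of_posSemidef_sub_of_posSemidef_add
          (hG.isHermitian.map _ fun _ => rfl) hsub hadd fun i => Real.exp_pos _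
    _ = ∏ i, Real.exp (|s| * ‖v i‖ ^ 2) := by
        simp [A, gram]

theorem DN_eq_prod_mul_det {n d : ℕ} (w : Conf n d) (θ θ' : ℝ) :
    DN w θ θ' = (∏ i, Real.exp (-(θ ^ 2 + θ' ^ 2) * ‖w i‖ ^ 2 / 2)) *
      ((gram ℝ w).map fun g => Real.exp (θ * θ' * g)).det := by
  have hentry (i j : Fin n) : Real.exp (-‖θ • w i - θ' • w j‖ ^ 2 / 2) =
      Real.exp (-θ ^ 2 * ‖w i‖ ^ 2 / 2) * Real.exp (θ * θ' * ⟪w i, w j⟫) *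
        Real.exp (-θ' ^ 2 * ‖w j‖ ^ 2 / 2) := by
    rw [← Real.exp_add, ← Real.exp_add, norm_sub_sq_real, real_inner_smul_left,
      real_inner_smul_right, norm_smul, norm_smul, Real.norm_eq_abs, Real.norm_eq_abs,
      mul_pow, mul_pow, sq_abs, sq_abs]
    congr 1
    ring
  have hfactor : Matrix.of (fun i j => Real.exp (-‖θ • w i - θ' • w j‖ ^ 2 / 2)) =
      diagonal (fun i => Real.exp (-θ ^ 2 * ‖w i‖ ^ 2 / 2)) *
        (gram ℝ w).map (fun g => Real.exp (θ * θ' * g)) *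
        diagonal (fun j => Real.exp (-θ' ^ 2 * ‖w j‖ ^ 2 / 2)) := by
    ext i j
    simp [gram, hentry]
  rw [DN, hfactor, det_mul, det_mul, det_diagonal, det_diagonal, mul_right_comm,
    ← Finset.prod_mul_distrib]
  congr 2 with i
  rw [← Real.exp_add]
  ring_nf

theorem stmt11_general (n d : ℕ) (w : Conf n d) (θ θ' : ℝ) :
    |DN w θ θ'| ≤ Real.exp (-(confNorm w ^ 2 / 2) * (|θ| - |θ'|) ^ 2) := by
  have hconf : confNorm w ^ 2 = ∑ i, ‖w i‖ ^ 2 := Real.sq_sqrt (by positivity)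
  calc |DN w θ θ'|
      ≤ (∏ i, Real.exp (-(θ ^ 2 + θ' ^ 2) * ‖w i‖ ^ 2 / 2)) *
          ∏ i, Real.exp (|θ * θ'| * ‖w i‖ ^ 2) := by
        rw [DN_eq_prod_mul_det, abs_mul, abs_of_pos (by positivity)]
        gcongr
        exact abs_det_map_exp_gram_le w _
    _ = Real.exp (-(confNorm w ^ 2 / 2) * (|θ| - |θ'|) ^ 2) := by
        simp_rw [← Finset.prod_mul_distrib, ← Real.exp_add]
        rw [← Real.exp_sum, hconf, Finset.sum_div, ← Finset.sum_neg_distrib, Finset.sum_mul]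
        refine congrArg Real.exp (Finset.sum_congr rfl fun i _ => ?_)
        rw [abs_mul, sub_sq, sq_abs, sq_abs]
        ring

/-- the Gaussian overlap kernel decays away from the diagonal and
anti-diagonal. -/
theorem stmt11 (n d : ℕ) (hn : 1 ≤ n) (hd : 1 ≤ d) (w : Conf n d) (θ θ' : ℝ) :
    |DN w θ θ'| ≤ Real.exp (-(confNorm w ^ 2 / 2) * (|θ| - |θ'|) ^ 2) :=
  stmt11_general n d w θ θ'

end
end

section
/- Let n, d ≥ 1 and v, w ∈ (ℝ^d)^n. Then there exist complex n×n matrices Q_0, Q_1, Q_2, … such that the series Σ_{k=0}^∞ Q_k converges entrywise (absolutely) to the matrix (exp(v_i·w_j))_{i,j=1}^n, and for every k ≥ 0: rank(Q_k) ≤ C(k+d−1, d−1) and the operator norm satisfies ‖Q_k‖ ≤ n·(‖v‖_∞ ‖w‖_∞ d)^k / k!. -/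
/-!
Take `Q_k = ((vᵢ·wⱼ)^k / k!)ᵢⱼ`, the Taylor terms of `exp`. Expanding `(Σₗ vᵢₗ wⱼₗ)^k` by the
multinomial theorem writes `Q_k` as a product through the space of degree-`k` monomials in `d`
variables, of dimension `C(k+d-1, d-1)`, which bounds the rank. Each entry of `Q_k` is at most
`(d ‖v‖_∞ ‖w‖_∞)^k / k!` in modulus, and an `n × n` matrix with entries bounded by `M` has
operator norm at most `n M` by Cauchy–Schwarz.
-/

open MeasureTheory Complex Matrix
open scoped BigOperators RealInnerProductSpace ENNReal NNReal

noncomputable section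

open Finset in
theorem Finset.card_piAntidiag_univ {ι : Type*} [Fintype ι] [DecidableEq ι] (k : ℕ) :
    #(piAntidiag (univ : Finset ι) k) = (Fintype.card ι).multichoose k := by
  rw [← map_sym_eq_piAntidiag, card_map, sym_univ, card_univ, Sym.card_sym_eq_multichoose]

theorem Nat.multichoose_le_choose (d k : ℕ) : d.multichoose k ≤ (k + d - 1).choose (d - 1) := by
  rcases d with _ | d
  · cases k <;> simp
  · rw [Nat.multichoose_eq, show d + 1 + k - 1 = d + k by omega,
      show k + (d + 1) - 1 = d + k by omega, Nat.add_sub_cancel]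
    exact Nat.choose_symm_add.ge

theorem Matrix.rank_smul_le {m n R : Type*} [Fintype n] [CommRing R] [StrongRankCondition R]
    (c : R) (A : Matrix m n R) : (c • A).rank ≤ A.rank := by
  classical
  simpa using rank_mul_le_left A (c • 1 : Matrix n n R)

open Finset in
/-- By the multinomial theorem the matrix factors through the degree-`k` monomials in `ι`
variables. -/
theorem Matrix.rank_of_dotProduct_pow_le {m n ι R : Type*} [Fintype n] [Fintype ι]
    [DecidableEq ι] [CommRing R] [StrongRankCondition R] (a : m → ι → R) (b : n → ι → R)
    (k : ℕ) :
    (of fun i j => (a i ⬝ᵥ b j) ^ k).rank ≤ (Fintype.card ι).multichoose k := by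
  let s := piAntidiag (univ : Finset ι) k
  let A : Matrix m s R := of fun i e => (Nat.multinomial univ e.1 : R) * ∏ l, a i l ^ e.1 l
  let B : Matrix s n R := of fun e j => ∏ l, b j l ^ e.1 l
  have hAB : (of fun i j => (a i ⬝ᵥ b j) ^ k) = A * B := by
    ext i j
    rw [of_apply, dotProduct, sum_pow_eq_sum_piAntidiag, mul_apply, ← sum_coe_sort s]
    refine sum_congr rfl fun e _ => ?_
    simp only [A, B, of_apply, mul_pow, prod_mul_distrib, mul_assoc]
  calc (of fun i j => (a i ⬝ᵥ b j) ^ k).rank ≤ Fintype.card s := by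
        rw [hAB]; exact (rank_mul_le_left A B).trans (rank_le_card_width A)
    _ = (Fintype.card ι).multichoose k := by rw [Fintype.card_coe, card_piAntidiag_univ]

theorem Matrix.norm_toEuclideanCLM_le_card_mul {n 𝕜 : Type*} [Fintype n] [DecidableEq n]
    [RCLike 𝕜] (A : Matrix n n 𝕜) {M : ℝ} (hM : 0 ≤ M) (hA : ∀ i j, ‖A i j‖ ≤ M) :
    ‖toEuclideanCLM (𝕜 := 𝕜) A‖ ≤ Fintype.card n * M := by
  refine ContinuousLinearMap.opNorm_le_bound _ (by positivity) fun x => ?_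
  have hrow (i : n) : ‖toEuclideanCLM (𝕜 := 𝕜) A x i‖ ≤ M * ∑ j, ‖x j‖ :=
    calc ‖toEuclideanCLM (𝕜 := 𝕜) A x i‖ = ‖∑ j, A i j * x j‖ := rfl
      _ ≤ ∑ j, ‖A i j‖ * ‖x j‖ := by
        simpa only [norm_mul] using norm_sum_le Finset.univ fun j => A i j * x j
      _ ≤ ∑ j, M * ‖x j‖ := by gcongr with j; exact hA i j
      _ = M * ∑ j, ‖x j‖ := (Finset.mul_sum ..).symm
  have hl1 : (∑ j, ‖x j‖) ^ 2 ≤ Fintype.card n * ‖x‖ ^ 2 := by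
    simpa [EuclideanSpace.norm_sq_eq] using sq_sum_le_card_mul_sum_sq (s := .univ) (f := (‖x ·‖))
  refine le_of_pow_le_pow_left₀ two_ne_zero (by positivity) ?_
  calc ‖toEuclideanCLM (𝕜 := 𝕜) A x‖ ^ 2 = ∑ i, ‖toEuclideanCLM (𝕜 := 𝕜) A x i‖ ^ 2 :=
        EuclideanSpace.norm_sq_eq _
    _ ≤ ∑ _i : n, (M * ∑ j, ‖x j‖) ^ 2 := by gcongr with i; exact hrow i
    _ = Fintype.card n * M ^ 2 * (∑ j, ‖x j‖) ^ 2 := by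
        simp only [Finset.sum_const, Finset.card_univ, nsmul_eq_mul]; ring
    _ ≤ Fintype.card n * M ^ 2 * (Fintype.card n * ‖x‖ ^ 2) := by gcongr
    _ = (Fintype.card n * M * ‖x‖) ^ 2 := by ring

theorem abs_le_linf {n d : ℕ} (v : Conf n d) (i : Fin n) (l : Fin d) : |v i l| ≤ linf v :=
  (le_ciSup (Set.finite_range _).bddAbove l).trans
    (le_ciSup (f := fun i => ⨆ l, |v i l|) (Set.finite_range _).bddAbove i)

theorem linf_nonneg {n d : ℕ} (v : Conf n d) : 0 ≤ linf v :=
  Real.iSup_nonneg fun _ => Real.iSup_nonneg fun _ => abs_nonneg _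

theorem abs_inner_le_linf {n d : ℕ} (v w : Conf n d) (i j : Fin n) :
    |⟪v i, w j⟫| ≤ linf v * linf w * d := by
  calc |⟪v i, w j⟫| = |∑ l, w j l * v i l| := by
        simp [EuclideanSpace.inner_eq_star_dotProduct, dotProduct]
    _ ≤ ∑ l, |w j l| * |v i l| := by
        simpa only [abs_mul] using Finset.abs_sum_le_sum_abs (fun l => w j l * v i l) Finset.univ
    _ ≤ ∑ _l : Fin d, linf w * linf v :=
        Finset.sum_le_sum fun l _ => mul_le_mul (abs_le_linf w j l) (abs_le_linf v i l)
          (abs_nonneg _) (linf_nonneg w)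
    _ = linf v * linf w * d := by simp [mul_comm]

def expInnerTerm {n d : ℕ} (v w : Conf n d) (k : ℕ) : Matrix (Fin n) (Fin n) ℂ :=
  ((k.factorial : ℂ)⁻¹) • of fun i j => ((⟪v i, w j⟫ : ℝ) : ℂ) ^ k

theorem expInnerTerm_apply {n d : ℕ} (v w : Conf n d) (k : ℕ) (i j : Fin n) :
    expInnerTerm v w k i j = ((⟪v i, w j⟫ : ℝ) : ℂ) ^ k / k.factorial := by
  simp [expInnerTerm, div_eq_inv_mul]

theorem norm_expInnerTerm_apply {n d : ℕ} (v w : Conf n d) (k : ℕ) (i j : Fin n) :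
    ‖expInnerTerm v w k i j‖ = |⟪v i, w j⟫| ^ k / k.factorial := by
  simp [expInnerTerm_apply]

theorem hasSum_expInnerTerm_apply {n d : ℕ} (v w : Conf n d) (i j : Fin n) :
    HasSum (fun k => expInnerTerm v w k i j) (Complex.exp (⟪v i, w j⟫ : ℝ)) := by
  rw [exp_eq_exp_ℂ]
  simpa only [expInnerTerm_apply] using NormedSpace.expSeries_div_hasSum_exp _

theorem rank_expInnerTerm_le {n d : ℕ} (v w : Conf n d) (k : ℕ) :
    (expInnerTerm v w k).rank ≤ (k + d - 1).choose (d - 1) := by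
  have hdot : ∀ i j, ((⟪v i, w j⟫ : ℝ) : ℂ) = (fun l => (v i l : ℂ)) ⬝ᵥ fun l => (w j l : ℂ) := by
    intro i j
    simp [EuclideanSpace.inner_eq_star_dotProduct, dotProduct, mul_comm]
  calc (expInnerTerm v w k).rank ≤ (of fun i j => ((⟪v i, w j⟫ : ℝ) : ℂ) ^ k).rank :=
        rank_smul_le _ _
    _ ≤ (Fintype.card (Fin d)).multichoose k := by
        simp only [hdot]; exact rank_of_dotProduct_pow_le _ _ k
    _ ≤ (k + d - 1).choose (d - 1) := by
        rw [Fintype.card_fin]; exact Nat.multichoose_le_choose d k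

theorem norm_toEuclideanCLM_expInnerTerm_le {n d : ℕ} (v w : Conf n d) (k : ℕ) :
    ‖toEuclideanCLM (𝕜 := ℂ) (expInnerTerm v w k)‖
      ≤ n * (linf v * linf w * d) ^ k / k.factorial := by
  have hM : 0 ≤ (linf v * linf w * d) ^ k / k.factorial := by
    have := linf_nonneg v; have := linf_nonneg w; positivity
  refine ((norm_toEuclideanCLM_le_card_mul _ hM fun i j => ?_).trans_eq ?_)
  · rw [norm_expInnerTerm_apply]
    gcongr
    exact abs_inner_le_linf v w i j
  · rw [Fintype.card_fin, mul_div_assoc]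

theorem stmt13_general (n d : ℕ) (v w : Conf n d) :
    ∃ Q : ℕ → Matrix (Fin n) (Fin n) ℂ,
      (∀ i j : Fin n, Summable (fun k => ‖Q k i j‖) ∧
        ∑' k, Q k i j = Complex.exp ((⟪v i, w j⟫ : ℝ))) ∧
      ∀ k : ℕ,
        (Q k).rank ≤ (k + d - 1).choose (d - 1) ∧
        ‖Matrix.toEuclideanCLM (𝕜 := ℂ) (Q k)‖
          ≤ (n : ℝ) * (linf v * linf w * d) ^ k / (Nat.factorial k : ℝ) := by
  refine ⟨expInnerTerm v w, fun i j => ⟨?_, (hasSum_expInnerTerm_apply v w i j).tsum_eq⟩,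
    fun k => ⟨rank_expInnerTerm_le v w k, norm_toEuclideanCLM_expInnerTerm_le v w k⟩⟩
  simpa only [norm_expInnerTerm_apply] using Real.summable_pow_div_factorial |⟪v i, w j⟫|

/-- the matrix `(e^{vᵢ·wⱼ})` decomposes as an entrywise absolutely convergent
series `Σₖ Qₖ` with rank and operator-norm bounds on the terms. -/
theorem stmt13 (n d : ℕ) (hn : 1 ≤ n) (hd : 1 ≤ d) (v w : Conf n d) :
    ∃ Q : ℕ → Matrix (Fin n) (Fin n) ℂ,
      (∀ i j : Fin n, Summable (fun k => ‖Q k i j‖) ∧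
        ∑' k, Q k i j = Complex.exp ((⟪v i, w j⟫ : ℝ))) ∧
      ∀ k : ℕ,
        (Q k).rank ≤ (k + d - 1).choose (d - 1) ∧
        ‖Matrix.toEuclideanCLM (𝕜 := ℂ) (Q k)‖
          ≤ (n : ℝ) * (linf v * linf w * d) ^ k / (Nat.factorial k : ℝ) :=
  stmt13_general n d v w
end
end

section
/- Let n, d ≥ 1 and w ∈ (ℝ^d)^n. For each fixed θ̃ ∈ ℝ, the function θ ↦ D^N_w(θ, θ̃) is differentiable on ℝ and its derivative satisfies |∂D^N_w(θ, θ̃)/∂θ| ≤ n^{3/2} · ‖w‖ / √e for all θ, θ̃ ∈ ℝ. -/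
open MeasureTheory Complex Matrix
open scoped BigOperators RealInnerProductSpace ENNReal NNReal

noncomputable section

/-! `DN w θ θ'` is `det K(θ)` for the Gaussian kernel matrix `K(θ) = (e^{-‖θwᵢ - θ'wⱼ‖²/2})ᵢⱼ`.
By Jacobi's formula its `θ`-derivative is a sum over columns `k` of determinants of `K(θ)` with
column `k` replaced by its derivative, whose `i`-th entry `-⟪wᵢ, θwᵢ - θ'w_k⟫ e^{-‖θwᵢ - θ'w_k‖²/2}`
is at most `‖wᵢ‖ e^{-1/2}` in absolute value, since `r e^{-r²/2} ≤ e^{-1/2}`. Expanding along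
column `k`, it suffices that every Gaussian kernel matrix `(e^{-‖uᵢ - vⱼ‖²/2})ᵢⱼ` has `|det| ≤ 1`.
Up to the constant `∫ e^{-2‖x‖²}` its entries are `L²` inner products of Gaussians `e^{-‖x - a‖²}`
of equal norm, and Hadamard's inequality (in an orthonormal basis of `span x`, after projecting
the `yⱼ` onto it) gives `|det (⟪xᵢ, yⱼ⟫)| ≤ ∏ ‖xᵢ‖ ∏ ‖yⱼ‖`. Finally `∑ ‖wᵢ‖ ≤ √n ‖w‖` by
Cauchy–Schwarz. -/

section Hadamard

variable {E : Type*} [NormedAddCommGroup E] [InnerProductSpace ℝ E]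

theorem OrthonormalBasis.abs_det_le_prod_norm {m : ℕ} (b : OrthonormalBasis (Fin m) ℝ E)
    (v : Fin m → E) : |b.toBasis.det v| ≤ ∏ i, ‖v i‖ := by
  have : Fact (Module.finrank ℝ E = m) := ⟨by simp [Module.finrank_eq_card_basis b.toBasis]⟩
  rw [← b.toBasis.orientation.volumeForm_robust' b v]
  exact Orientation.abs_volumeForm_apply_le _ v

theorem abs_det_inner_le_prod_norm_mul_prod_norm {m : ℕ} (x y : Fin m → E) :
    |(of fun i j => ⟪x i, y j⟫).det| ≤ (∏ i, ‖x i‖) * ∏ j, ‖y j‖ := by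
  by_cases hx : LinearIndependent ℝ x
  swap
  · have hrows : ¬LinearIndependent ℝ fun i => (of fun i j => ⟪x i, y j⟫) i :=
      fun h => hx (h.of_comp (LinearMap.pi fun j => (innerₗ E).flip (y j)))
    rw [det_eq_zero_of_not_linearIndependent_rows hrows, abs_zero]
    positivity
  set V := Submodule.span ℝ (Set.range x)
  have : FiniteDimensional ℝ V := FiniteDimensional.span_of_finite ℝ (Set.finite_range x)
  have hrank : Module.finrank ℝ V = m := by rw [finrank_span_eq_card hx, Fintype.card_fin]
  let b : OrthonormalBasis (Fin m) ℝ V := (stdOrthonormalBasis ℝ V).reindex (finCongr hrank)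
  let x' : Fin m → V := fun i => ⟨x i, Submodule.subset_span (Set.mem_range_self i)⟩
  let y' : Fin m → V := fun j => V.orthogonalProjectionOnto (y j)
  have hfactor :
      of (fun i j => ⟪x i, y j⟫) = (b.toBasis.toMatrix x')ᵀ * b.toBasis.toMatrix y' := by
    ext i j
    simp only [of_apply, mul_apply, transpose_apply, Module.Basis.toMatrix_apply,
      OrthonormalBasis.coe_toBasis_repr_apply, OrthonormalBasis.repr_apply_apply]
    rw [← Submodule.inner_orthogonalProjectionOnto_eq_of_mem_left (x' i),
      ← b.sum_inner_mul_inner]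
    simp only [real_inner_comm (x' i)]
    rfl
  have hproj : ∀ j, ‖y' j‖ ≤ ‖y j‖ := fun j => V.norm_orthogonalProjectionOnto_apply_le (y j)
  rw [hfactor, det_mul, det_transpose, ← Module.Basis.det_apply, ← Module.Basis.det_apply,
    abs_mul]
  gcongr
  · exact b.abs_det_le_prod_norm x'
  · exact (b.abs_det_le_prod_norm y').trans (Finset.prod_le_prod (fun _ _ => norm_nonneg _)
      fun j _ => hproj j)

end Hadamard

theorem hasDerivAt_det {𝕜 𝔸 ι : Type*} [NontriviallyNormedField 𝕜] [NormedCommRing 𝔸]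
    [NormedAlgebra 𝕜 𝔸] [Fintype ι] [DecidableEq ι] {M : 𝕜 → Matrix ι ι 𝔸}
    {M' : Matrix ι ι 𝔸} {t : 𝕜} (h : ∀ i j, HasDerivAt (fun s => M s i j) (M' i j) t) :
    HasDerivAt (fun s => (M s).det) (∑ k, ((M t).updateCol k fun i => M' i k).det) t := by
  simp_rw [det_apply']
  refine (HasDerivAt.fun_sum fun σ _ =>
    (HasDerivAt.fun_finsetProd fun k _ => h (σ k) k).const_mul
      ((Equiv.Perm.sign σ : ℤ) : 𝔸)).congr_deriv ?_
  rw [Finset.sum_comm]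
  refine Finset.sum_congr rfl fun σ _ => ?_
  rw [Finset.mul_sum]
  refine Finset.sum_congr rfl fun k _ => ?_
  rw [← Finset.mul_prod_erase _ _ (Finset.mem_univ k), smul_eq_mul, mul_comm _ (M' (σ k) k)]
  congr 2
  · simp
  · exact Finset.prod_congr rfl fun j hj => by simp [(Finset.mem_erase.mp hj).1]

theorem abs_det_updateCol_le {R : Type*} [CommRing R] [LinearOrder R] [IsStrictOrderedRing R]
    {m : ℕ} (M : Matrix (Fin (m + 1)) (Fin (m + 1)) R) (k : Fin (m + 1)) (c : Fin (m + 1) → R) :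
    |(M.updateCol k c).det| ≤ ∑ i, |c i| * |(M.submatrix i.succAbove k.succAbove).det| := by
  rw [det_succ_column _ k]
  refine (Finset.abs_sum_le_sum_abs _ _).trans_eq (Finset.sum_congr rfl fun i _ => ?_)
  simp [abs_mul]

theorem mul_exp_neg_sq_div_two_le (r : ℝ) : r * Real.exp (-r ^ 2 / 2) ≤ Real.exp (-1 / 2) := by
  have hr : r ≤ Real.exp ((r ^ 2 - 1) / 2) := by
    nlinarith [Real.add_one_le_exp ((r ^ 2 - 1) / 2), sq_nonneg (r - 1)]
  calc r * Real.exp (-r ^ 2 / 2) ≤ Real.exp ((r ^ 2 - 1) / 2) * Real.exp (-r ^ 2 / 2) := by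
        gcongr
    _ = Real.exp (-1 / 2) := by rw [← Real.exp_add]; ring_nf

section GaussianKernel

variable {E : Type*} [NormedAddCommGroup E] [InnerProductSpace ℝ E]

def gaussianKernelMatrix {ι κ : Type*} (u : ι → E) (v : κ → E) : Matrix ι κ ℝ :=
  of fun i j => Real.exp (-‖u i - v j‖ ^ 2 / 2)

theorem sq_norm_sub_add_sq_norm_sub (a b x : E) :
    ‖x - a‖ ^ 2 + ‖x - b‖ ^ 2 = 2 * ‖x - (1 / 2 : ℝ) • (a + b)‖ ^ 2 + ‖a - b‖ ^ 2 / 2 := by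
  simp only [@norm_sub_sq_real, norm_smul, inner_smul_right, inner_add_right, mul_pow,
    @norm_add_sq_real]
  norm_num
  ring

theorem abs_inner_mul_exp_neg_sq_norm_div_two_le (a x : E) :
    |⟪a, x⟫ * Real.exp (-‖x‖ ^ 2 / 2)| ≤ ‖a‖ * Real.exp (-1 / 2) := by
  rw [abs_mul, abs_of_pos (Real.exp_pos _)]
  calc |⟪a, x⟫| * Real.exp (-‖x‖ ^ 2 / 2) ≤ ‖a‖ * (‖x‖ * Real.exp (-‖x‖ ^ 2 / 2)) := by
        rw [← mul_assoc]; gcongr; exact abs_real_inner_le_norm a x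
    _ ≤ ‖a‖ * Real.exp (-1 / 2) := by gcongr; exact mul_exp_neg_sq_div_two_le _

theorem hasDerivAt_exp_neg_sq_norm_smul_sub_div_two (a b : E) (t : ℝ) :
    HasDerivAt (fun s : ℝ => Real.exp (-‖s • a - b‖ ^ 2 / 2))
      (-⟪a, t • a - b⟫ * Real.exp (-‖t • a - b‖ ^ 2 / 2)) t := by
  have h : HasDerivAt (fun s : ℝ => s • a - b) a t := by
    simpa using ((hasDerivAt_id t).smul_const a).sub_const b
  refine (h.norm_sq.neg.div_const 2).exp.congr_deriv ?_
  rw [real_inner_comm, Pi.neg_apply]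
  ring

theorem hasDerivAt_det_gaussianKernelMatrix_smul_left {n : ℕ} (w v : Fin n → E) (t : ℝ) :
    HasDerivAt (fun s => (gaussianKernelMatrix (s • w) v).det)
      (∑ k, ((gaussianKernelMatrix (t • w) v).updateCol k
        fun i => -⟪w i, t • w i - v k⟫ * Real.exp (-‖t • w i - v k‖ ^ 2 / 2)).det) t :=
  hasDerivAt_det fun i j => hasDerivAt_exp_neg_sq_norm_smul_sub_div_two (w i) (v j) t

variable [FiniteDimensional ℝ E] [MeasurableSpace E] [BorelSpace E]

theorem integrable_exp_neg_mul_sq_norm_sub {c : ℝ} (hc : 0 < c) (a : E) :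
    Integrable fun x : E => Real.exp (-c * ‖x - a‖ ^ 2) := by
  have h : Integrable fun x : E => Real.exp (-c * ‖x‖ ^ 2) := by
    refine (GaussianFourier.integrable_cexp_neg_mul_sq_norm_add (V := E) (b := (c : ℂ))
      (by simpa using hc) 0 0).norm.congr (ae_of_all _ fun x => ?_)
    simp [Complex.norm_exp, ← Complex.ofReal_pow]
  exact h.comp_sub_right a

theorem memLp_exp_neg_sq_norm_sub (a : E) : MemLp (fun x : E => Real.exp (-‖x - a‖ ^ 2)) 2 := by
  rw [memLp_two_iff_integrable_sq (by fun_prop)]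
  refine (integrable_exp_neg_mul_sq_norm_sub two_pos a).congr (ae_of_all _ fun x => ?_)
  dsimp only
  rw [← Real.exp_nat_mul]
  ring_nf

def gaussianFeature (a : E) : Lp ℝ 2 (volume : Measure E) :=
  (memLp_exp_neg_sq_norm_sub a).toLp _

theorem inner_gaussianFeature (a b : E) :
    ⟪gaussianFeature a, gaussianFeature b⟫ =
      Real.exp (-‖a - b‖ ^ 2 / 2) * ∫ x : E, Real.exp (-2 * ‖x‖ ^ 2) := by
  have hprod : ∀ x : E, Real.exp (-‖x - a‖ ^ 2) * Real.exp (-‖x - b‖ ^ 2) =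
      Real.exp (-‖a - b‖ ^ 2 / 2) * Real.exp (-2 * ‖x - (1 / 2 : ℝ) • (a + b)‖ ^ 2) := by
    intro x
    rw [← Real.exp_add, ← Real.exp_add]
    congr 1
    linarith [sq_norm_sub_add_sq_norm_sub a b x]
  calc ⟪gaussianFeature a, gaussianFeature b⟫
      = ∫ x : E, Real.exp (-‖x - a‖ ^ 2) * Real.exp (-‖x - b‖ ^ 2) := by
        rw [L2.inner_def]
        refine integral_congr_ae ?_
        filter_upwards [(memLp_exp_neg_sq_norm_sub a).coeFn_toLp,
          (memLp_exp_neg_sq_norm_sub b).coeFn_toLp] with x ha hb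
        simp [gaussianFeature, ha, hb, mul_comm]
    _ = Real.exp (-‖a - b‖ ^ 2 / 2) * ∫ x : E, Real.exp (-2 * ‖x‖ ^ 2) := by
        simp_rw [hprod, integral_const_mul]
        rw [integral_sub_right_eq_self (fun x : E => Real.exp (-2 * ‖x‖ ^ 2))]

theorem abs_det_gaussianKernelMatrix_le_one {m : ℕ} (u v : Fin m → E) :
    |(gaussianKernelMatrix u v).det| ≤ 1 := by
  have hJ : 0 < ∫ x : E, Real.exp (-2 * ‖x‖ ^ 2) := integral_exp_pos <|
    (integrable_exp_neg_mul_sq_norm_sub two_pos (0 : E)).congr (ae_of_all _ fun x => by simp)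
  have hnorm : ∀ a : E, ‖gaussianFeature a‖ = √(∫ x : E, Real.exp (-2 * ‖x‖ ^ 2)) := by
    intro a
    rw [← Real.sqrt_sq (norm_nonneg _), ← real_inner_self_eq_norm_sq, inner_gaussianFeature,
      sub_self, norm_zero, zero_pow two_ne_zero, neg_zero, zero_div, Real.exp_zero, one_mul]
  have hscale : gaussianKernelMatrix u v =
      (∫ x : E, Real.exp (-2 * ‖x‖ ^ 2))⁻¹ •
        of fun i j => ⟪gaussianFeature (u i), gaussianFeature (v j)⟫ := by
    ext i j
    rw [Matrix.smul_apply, gaussianKernelMatrix, of_apply, of_apply, inner_gaussianFeature,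
      smul_eq_mul, mul_comm, mul_inv_cancel_right₀ hJ.ne']
  have hgram := abs_det_inner_le_prod_norm_mul_prod_norm (fun i => gaussianFeature (u i))
    fun j => gaussianFeature (v j)
  simp only [hnorm, Finset.prod_const, Finset.card_univ, Fintype.card_fin, ← mul_pow,
    Real.mul_self_sqrt hJ.le] at hgram
  rw [hscale, det_smul, Fintype.card_fin, abs_mul, abs_pow, abs_inv, abs_of_pos hJ, inv_pow]
  exact inv_mul_le_one_of_le₀ hgram (by positivity)

theorem abs_det_updateCol_gaussianKernelMatrix_le {n : ℕ} (u v : Fin n → E) (k : Fin n)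
    (c : Fin n → ℝ) : |((gaussianKernelMatrix u v).updateCol k c).det| ≤ ∑ i, |c i| := by
  obtain ⟨m, rfl⟩ := Nat.exists_eq_succ_of_ne_zero k.pos.ne'
  refine (abs_det_updateCol_le _ k c).trans (Finset.sum_le_sum fun i _ => ?_)
  exact mul_le_of_le_one_right (abs_nonneg _)
    (abs_det_gaussianKernelMatrix_le_one (u ∘ i.succAbove) (v ∘ k.succAbove))

theorem abs_deriv_det_gaussianKernelMatrix_smul_left_le {n : ℕ} (w v : Fin n → E) (t : ℝ) :
    |deriv (fun s => (gaussianKernelMatrix (s • w) v).det) t| ≤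
      n * (∑ i, ‖w i‖) * Real.exp (-1 / 2) := by
  rw [(hasDerivAt_det_gaussianKernelMatrix_smul_left w v t).deriv]
  calc _ ≤ ∑ _k : Fin n, ∑ i, ‖w i‖ * Real.exp (-1 / 2) := by
        refine (Finset.abs_sum_le_sum_abs _ _).trans (Finset.sum_le_sum fun k _ => ?_)
        refine (abs_det_updateCol_gaussianKernelMatrix_le _ _ k _).trans
          (Finset.sum_le_sum fun i _ => ?_)
        rw [neg_mul, abs_neg]
        exact abs_inner_mul_exp_neg_sq_norm_div_two_le _ _
    _ = n * (∑ i, ‖w i‖) * Real.exp (-1 / 2) := by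
        simp [Finset.sum_mul, mul_assoc]

end GaussianKernel

theorem sum_norm_le_sqrt_mul_confNorm {n d : ℕ} (w : Conf n d) :
    ∑ i, ‖w i‖ ≤ √n * confNorm w := by
  simpa [confNorm] using Real.sum_mul_le_sqrt_mul_sqrt Finset.univ (fun _ => 1) (‖w ·‖)

theorem stmt16_general (n d : ℕ) (w : Conf n d) :
    (∀ θ' : ℝ, Differentiable ℝ (fun θ => DN w θ θ')) ∧
    ∀ θ θ' : ℝ, |deriv (fun θ => DN w θ θ') θ|
      ≤ (n : ℝ) ^ ((3 : ℝ) / 2) * confNorm w / Real.sqrt (Real.exp 1) := by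
  have hDN : ∀ θ', (fun θ => DN w θ θ') = fun θ => (gaussianKernelMatrix (θ • w) (θ' • w)).det :=
    fun _ => rfl
  refine ⟨fun θ' θ => ?_, fun θ θ' => ?_⟩
  · rw [hDN]
    exact (hasDerivAt_det_gaussianKernelMatrix_smul_left w _ θ).differentiableAt
  rw [hDN]
  calc _ ≤ n * (∑ i, ‖w i‖) * Real.exp (-1 / 2) :=
        abs_deriv_det_gaussianKernelMatrix_smul_left_le w _ θ
    _ ≤ n * (√n * confNorm w) * Real.exp (-1 / 2) := by
        gcongr; exact sum_norm_le_sqrt_mul_confNorm w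
    _ = (n : ℝ) ^ ((3 : ℝ) / 2) * confNorm w / √(Real.exp 1) := by
        have hexp : Real.exp (-1 / 2) = (√(Real.exp 1))⁻¹ := by
          rw [← Real.exp_half, ← Real.exp_neg]; ring_nf
        have hpow : (n : ℝ) ^ ((3 : ℝ) / 2) = n * √n := by
          rw [show (3 : ℝ) / 2 = 1 + 1 / 2 by norm_num,
            Real.rpow_add' (Nat.cast_nonneg n) (by norm_num), Real.rpow_one, Real.sqrt_eq_rpow]
        rw [hexp, hpow]
        ring

/-- the Gaussian overlap kernel is differentiable in its first argument with
derivative bounded by `n^{3/2}‖w‖/√e`. -/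
theorem stmt16 (n d : ℕ) (hn : 1 ≤ n) (hd : 1 ≤ d) (w : Conf n d) :
    (∀ θ' : ℝ, Differentiable ℝ (fun θ => DN w θ θ')) ∧
    ∀ θ θ' : ℝ, |deriv (fun θ => DN w θ θ') θ|
      ≤ (n : ℝ) ^ ((3 : ℝ) / 2) * confNorm w / Real.sqrt (Real.exp 1) :=
  stmt16_general n d w

end
end

section
/- Let ε > 0 and y ∈ ℝ. Then the absolutely convergent improper integral satisfies −(1/π) ∫_ε^∞ cos(θ y)/θ² dθ = |y|/2 − cos(ε y)/(π ε) − (y/π)·Si(ε y), where Si(u) = ∫_0^u (sin s)/s ds. Consequently, the low-frequency remainder of ReLU satisfies | ReLU(y) − ( −(1/π) ∫_ε^∞ cos(θ y)/θ² dθ ) − y/2 − 1/(π ε) | ≤ (3/(2π)) · ε · y², where ReLU(y) = max(y, 0). -/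
/-!
Integrating by parts against `d(-1/θ)` gives
`∫_ε^T cos(θy)/θ² dθ = cos(εy)/ε - cos(Ty)/T - y (Si(Ty) - Si(εy))`,
so letting `T → ∞` only needs the Dirichlet integral `Si x → π/2`. For that, Fubini applied to
`sin θ / θ = ∫_0^∞ e^{-θt} sin θ dt` on `[a, T]` with `0 < a` gives `∫_a^T sin θ/θ dθ = G a - G T`,
where `G b = ∫_0^∞ e^{-bt} (t sin b + cos b)/(1 + t²) dt`; `G b → 0` as `b → ∞`, and
`G b → ∫_0^∞ dt/(1 + t²) = π/2` as `b → 0⁺` by dominated convergence. The bound on the remainder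
then follows from `max y 0 = (y + |y|)/2`, `0 ≤ 1 - cos u ≤ u²/2` and `|Si u| ≤ |u|`.
-/

open MeasureTheory Complex Matrix
open scoped BigOperators RealInnerProductSpace ENNReal NNReal

noncomputable section

open MeasureTheory Set Filter
open scoped Topology Real

def sinIntegral (x : ℝ) : ℝ := ∫ s in (0 : ℝ)..x, Real.sin s / s

lemma abs_sin_div_self_le_one (s : ℝ) : |Real.sin s / s| ≤ 1 := by
  rcases eq_or_ne s 0 with rfl | hs
  · simp
  · rw [abs_div, div_le_one (abs_pos.mpr hs)]
    exact Real.abs_sin_le_abs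

lemma intervalIntegrable_sin_div_self (a b : ℝ) :
    IntervalIntegrable (fun s => Real.sin s / s) volume a b :=
  (intervalIntegrable_const (c := (1 : ℝ))).mono_fun'
    (Real.measurable_sin.div measurable_id).aestronglyMeasurable
    (ae_of_all _ fun s => (Real.norm_eq_abs _).trans_le (abs_sin_div_self_le_one s))

lemma abs_sinIntegral_le (x : ℝ) : |sinIntegral x| ≤ |x| := by
  simpa [sinIntegral] using intervalIntegral.norm_integral_le_of_norm_le_const (a := 0) (b := x)
    (f := fun s => Real.sin s / s) fun s _ =>
      (Real.norm_eq_abs _).trans_le (abs_sin_div_self_le_one s)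

lemma sinIntegral_neg (x : ℝ) : sinIntegral (-x) = -sinIntegral x := by
  have h := intervalIntegral.integral_comp_neg (a := 0) (b := x) fun s => Real.sin s / s
  simp only [Real.sin_neg, neg_div_neg_eq, neg_zero] at h
  rw [sinIntegral, intervalIntegral.integral_symm, ← h, sinIntegral]

/-- `∫_b^∞ sin θ / θ dθ` for `b > 0`. -/
def sinIntegralTail (b : ℝ) : ℝ :=
  ∫ t in Ioi (0 : ℝ), Real.exp (-b * t) * (t * Real.sin b + Real.cos b) / (1 + t ^ 2)

lemma hasDerivAt_sinIntegralTail_integrand (t θ : ℝ) :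
    HasDerivAt (fun θ => Real.exp (-θ * t) * (t * Real.sin θ + Real.cos θ) / (1 + t ^ 2))
      (-(Real.exp (-θ * t) * Real.sin θ)) θ := by
  have h : HasDerivAt (fun θ => Real.exp (-θ * t) * (t * Real.sin θ + Real.cos θ) / (1 + t ^ 2))
      ((Real.exp (-θ * t) * (-1 * t) * (t * Real.sin θ + Real.cos θ)
        + Real.exp (-θ * t) * (t * Real.cos θ - Real.sin θ)) / (1 + t ^ 2)) θ := by
    have h' : HasDerivAt (fun θ => t * Real.sin θ + Real.cos θ)
        (t * Real.cos θ - Real.sin θ) θ :=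
      ((Real.hasDerivAt_sin θ).const_mul t).fun_add (Real.hasDerivAt_cos θ)
    exact ((((hasDerivAt_neg θ).mul_const t).exp).mul h').div_const _
  refine h.congr_deriv ?_
  field_simp
  ring

lemma abs_mul_sin_add_cos_le {t : ℝ} (ht : 0 ≤ t) (b : ℝ) :
    |t * Real.sin b + Real.cos b| ≤ t * |Real.sin b| + 1 := by
  calc |t * Real.sin b + Real.cos b| ≤ |t * Real.sin b| + |Real.cos b| := abs_add_le _ _
    _ ≤ t * |Real.sin b| + 1 := by
      rw [abs_mul, abs_of_nonneg ht]
      gcongr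
      exact Real.abs_cos_le_one b

lemma norm_sinIntegralTail_integrand_le (b : ℝ) {t : ℝ} (ht : 0 ≤ t) :
    ‖Real.exp (-b * t) * (t * Real.sin b + Real.cos b) / (1 + t ^ 2)‖
      ≤ 2 * Real.exp (-b * t) := by
  have h1 : 0 < 1 + t ^ 2 := by positivity
  rw [Real.norm_eq_abs, abs_div, abs_mul, Real.abs_exp, abs_of_pos h1, div_le_iff₀ h1]
  have h2 : t * |Real.sin b| + 1 ≤ 2 * (1 + t ^ 2) := by
    nlinarith [Real.abs_sin_le_one b, abs_nonneg (Real.sin b)]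
  calc Real.exp (-b * t) * |t * Real.sin b + Real.cos b|
      ≤ Real.exp (-b * t) * (2 * (1 + t ^ 2)) := by
        gcongr
        exact (abs_mul_sin_add_cos_le ht b).trans h2
    _ = 2 * Real.exp (-b * t) * (1 + t ^ 2) := by ring

lemma norm_sinIntegralTail_integrand_le_of_pos {b : ℝ} (hb : 0 < b) {t : ℝ} (ht : 0 ≤ t) :
    ‖Real.exp (-b * t) * (t * Real.sin b + Real.cos b) / (1 + t ^ 2)‖
      ≤ 2 * (1 + t ^ 2)⁻¹ := by
  have h1 : 0 < 1 + t ^ 2 := by positivity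
  rw [Real.norm_eq_abs, abs_div, abs_mul, Real.abs_exp, abs_of_pos h1, div_eq_mul_inv]
  gcongr
  have hxe : b * t * Real.exp (-b * t) ≤ 1 := by
    rw [neg_mul, Real.exp_neg, ← div_eq_mul_inv, div_le_one (Real.exp_pos _)]
    linarith [Real.add_one_le_exp (b * t)]
  have hsin : |Real.sin b| ≤ b := (Real.abs_sin_le_abs).trans_eq (abs_of_pos hb)
  have he : Real.exp (-b * t) ≤ 1 := Real.exp_le_one_iff.mpr (by nlinarith)
  calc Real.exp (-b * t) * |t * Real.sin b + Real.cos b|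
      ≤ Real.exp (-b * t) * (t * b + 1) := by
        gcongr
        exact (abs_mul_sin_add_cos_le ht b).trans (by gcongr)
    _ = b * t * Real.exp (-b * t) + Real.exp (-b * t) := by ring
    _ ≤ 2 := by linarith

lemma integral_exp_neg_mul_Ioi_zero {b : ℝ} (hb : 0 < b) :
    ∫ t in Ioi (0 : ℝ), Real.exp (-b * t) = 1 / b := by
  rw [integral_exp_mul_Ioi (neg_neg_iff_pos.mpr hb), mul_zero, Real.exp_zero]
  ring

lemma integrableOn_sinIntegralTail_integrand {b : ℝ} (hb : 0 < b) :
    IntegrableOn (fun t => Real.exp (-b * t) * (t * Real.sin b + Real.cos b) / (1 + t ^ 2))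
      (Ioi 0) := by
  refine ((exp_neg_integrableOn_Ioi 0 hb).const_mul 2).mono'
    (Measurable.aestronglyMeasurable (by fun_prop)) ?_
  filter_upwards [ae_restrict_mem measurableSet_Ioi] with t (ht : 0 < t)
  exact norm_sinIntegralTail_integrand_le b ht.le

lemma abs_sinIntegralTail_le {b : ℝ} (hb : 0 < b) : |sinIntegralTail b| ≤ 2 / b := by
  have h := norm_integral_le_of_norm_le ((exp_neg_integrableOn_Ioi 0 hb).const_mul 2) <|
    (ae_restrict_mem measurableSet_Ioi).mono fun t (ht : 0 < t) =>
      norm_sinIntegralTail_integrand_le b ht.le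
  rwa [integral_const_mul, integral_exp_neg_mul_Ioi_zero hb, mul_one_div] at h

lemma tendsto_sinIntegralTail_atTop : Tendsto sinIntegralTail atTop (𝓝 0) := by
  refine squeeze_zero_norm' ?_ ((tendsto_const_nhds (x := (2 : ℝ))).div_atTop tendsto_id)
  filter_upwards [eventually_gt_atTop 0] with b hb
  exact abs_sinIntegralTail_le hb

lemma tendsto_sinIntegralTail_nhdsGT_zero :
    Tendsto sinIntegralTail (𝓝[>] 0) (𝓝 (π / 2)) := by
  have hlim : ∫ t in Ioi (0 : ℝ), (1 + t ^ 2)⁻¹ = π / 2 := by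
    rw [integral_Ioi_inv_one_add_sq]; simp
  rw [← hlim]
  refine tendsto_integral_filter_of_dominated_convergence (fun t => 2 * (1 + t ^ 2)⁻¹)
    (Eventually.of_forall fun b => Measurable.aestronglyMeasurable (by fun_prop)) ?_
    (integrable_inv_one_add_sq.integrableOn.const_mul 2) ?_
  · filter_upwards [self_mem_nhdsWithin] with b (hb : 0 < b)
    filter_upwards [ae_restrict_mem measurableSet_Ioi] with t (ht : 0 < t)
    exact norm_sinIntegralTail_integrand_le_of_pos hb ht.le
  · refine ae_of_all _ fun t => ?_
    have h : ContinuousAt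
        (fun b => Real.exp (-b * t) * (t * Real.sin b + Real.cos b) / (1 + t ^ 2)) 0 := by
      fun_prop (disch := positivity)
    simpa using h.tendsto.mono_left nhdsWithin_le_nhds

lemma integral_exp_neg_mul_sin (t a T : ℝ) :
    ∫ θ in a..T, Real.exp (-θ * t) * Real.sin θ
      = Real.exp (-a * t) * (t * Real.sin a + Real.cos a) / (1 + t ^ 2)
        - Real.exp (-T * t) * (t * Real.sin T + Real.cos T) / (1 + t ^ 2) := by
  have h := intervalIntegral.integral_eq_sub_of_hasDerivAt
    (fun θ _ => hasDerivAt_sinIntegralTail_integrand t θ)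
    (Continuous.intervalIntegrable (by fun_prop) a T)
  rw [intervalIntegral.integral_neg] at h
  linarith

lemma integral_sin_div_self_eq_sub_sinIntegralTail {a T : ℝ} (ha : 0 < a) (haT : a ≤ T) :
    ∫ θ in a..T, Real.sin θ / θ = sinIntegralTail a - sinIntegralTail T := by
  have hint : Integrable (Function.uncurry fun θ t => Real.exp (-θ * t) * Real.sin θ)
      ((volume.restrict (Ioc a T)).prod (volume.restrict (Ioi 0))) := by
    have hdom : Integrable (fun z : ℝ × ℝ => 1 * Real.exp (-a * z.2))
        ((volume.restrict (Ioc a T)).prod (volume.restrict (Ioi 0))) :=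
      Integrable.mul_prod (f := fun _ => (1 : ℝ)) (integrableOn_const measure_Ioc_lt_top.ne)
        (exp_neg_integrableOn_Ioi 0 ha)
    refine hdom.mono' (Measurable.aestronglyMeasurable (by fun_prop)) ?_
    rw [Measure.prod_restrict]
    filter_upwards [ae_restrict_mem (measurableSet_Ioc.prod measurableSet_Ioi)]
      with ⟨θ, t⟩ ⟨hθ, ht⟩
    rw [Function.uncurry_apply_pair, Real.norm_eq_abs, abs_mul, Real.abs_exp, one_mul]
    have hexp : Real.exp (-θ * t) ≤ Real.exp (-a * t) := by
      have ht : 0 < t := ht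
      have hθ : a < θ := hθ.1
      gcongr
    nlinarith [Real.abs_sin_le_one θ, Real.exp_pos (-θ * t), abs_nonneg (Real.sin θ)]
  have hinner : ∀ θ ∈ Ioc a T, ∫ t in Ioi (0 : ℝ), Real.exp (-θ * t) * Real.sin θ
      = Real.sin θ / θ := fun θ hθ => by
    rw [integral_mul_const, integral_exp_neg_mul_Ioi_zero (ha.trans hθ.1), one_div_mul_eq_div]
  rw [intervalIntegral.integral_of_le haT, ← setIntegral_congr_fun measurableSet_Ioc hinner,
    integral_integral_swap hint, sinIntegralTail, sinIntegralTail,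
    ← integral_sub (integrableOn_sinIntegralTail_integrand ha)
      (integrableOn_sinIntegralTail_integrand (ha.trans_le haT))]
  refine integral_congr_ae (ae_of_all _ fun t => ?_)
  simp only [← intervalIntegral.integral_of_le haT, integral_exp_neg_mul_sin]

lemma sinIntegral_add_sinIntegralTail {b : ℝ} (hb : 0 < b) :
    sinIntegral b + sinIntegralTail b = π / 2 := by
  have hconst : ∀ a ∈ Ioc 0 b,
      sinIntegral a + sinIntegralTail a = sinIntegral b + sinIntegralTail b := fun a ha => by
    rw [sinIntegral, sinIntegral,
      ← intervalIntegral.integral_add_adjacent_intervals (intervalIntegrable_sin_div_self 0 a)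
        (intervalIntegrable_sin_div_self a b),
      integral_sin_div_self_eq_sub_sinIntegralTail ha.1 ha.2]
    ring
  have hSi : Tendsto sinIntegral (𝓝[>] 0) (𝓝 0) := by
    refine squeeze_zero_norm (fun x => abs_sinIntegral_le x) ?_
    simpa using (continuous_abs.tendsto (0 : ℝ)).mono_left nhdsWithin_le_nhds
  have hlim_const : Tendsto (fun a => sinIntegral a + sinIntegralTail a) (𝓝[>] 0)
      (𝓝 (sinIntegral b + sinIntegralTail b)) :=
    tendsto_const_nhds.congr' <| eventually_of_mem (Ioc_mem_nhdsGT hb) fun a ha =>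
      (hconst a ha).symm
  simpa using tendsto_nhds_unique hlim_const (hSi.add tendsto_sinIntegralTail_nhdsGT_zero)

theorem tendsto_sinIntegral_atTop : Tendsto sinIntegral atTop (𝓝 (π / 2)) := by
  have h : Tendsto (fun b => π / 2 - sinIntegralTail b) atTop (𝓝 (π / 2 - 0)) :=
    tendsto_sinIntegralTail_atTop.const_sub _
  rw [sub_zero] at h
  refine h.congr' ?_
  filter_upwards [eventually_gt_atTop 0] with b hb
  linarith [sinIntegral_add_sinIntegralTail hb]

lemma tendsto_mul_sinIntegral_mul_atTop (y : ℝ) :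
    Tendsto (fun T => y * sinIntegral (T * y)) atTop (𝓝 (|y| * (π / 2))) := by
  rcases lt_trichotomy y 0 with hy | rfl | hy
  · have h := (tendsto_sinIntegral_atTop.comp
      (tendsto_id.atTop_mul_const (neg_pos.mpr hy))).const_mul (-y)
    rw [abs_of_neg hy]
    refine h.congr fun T => ?_
    simp only [Function.comp, id, mul_neg, sinIntegral_neg]
    ring
  · simp
  · rw [abs_of_pos hy]
    exact (tendsto_sinIntegral_atTop.comp (tendsto_id.atTop_mul_const hy)).const_mul y

lemma integral_sin_mul_div_self (a b y : ℝ) :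
    ∫ θ in a..b, Real.sin (θ * y) / θ = sinIntegral (b * y) - sinIntegral (a * y) := by
  rcases eq_or_ne y 0 with rfl | hy
  · simp
  have h : ∀ θ, Real.sin (θ * y) / θ = y * (fun s => Real.sin s / s) (θ * y) := fun θ => by
    rcases eq_or_ne θ 0 with rfl | hθ
    · simp
    · field_simp
  simp only [h]
  rw [intervalIntegral.integral_const_mul,
    intervalIntegral.integral_comp_mul_right (f := fun s => Real.sin s / s) hy, smul_eq_mul,
    sinIntegral, sinIntegral,
    intervalIntegral.integral_interval_sub_left (intervalIntegrable_sin_div_self _ _)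
      (intervalIntegrable_sin_div_self _ _)]
  field_simp

lemma integral_cos_mul_div_sq {ε T : ℝ} (hε : 0 < ε) (hT : 0 < T) (y : ℝ) :
    ∫ θ in ε..T, Real.cos (θ * y) / θ ^ 2
      = Real.cos (ε * y) / ε - Real.cos (T * y) / T
        - (y * sinIntegral (T * y) - y * sinIntegral (ε * y)) := by
  have hpos : ∀ θ ∈ uIcc ε T, θ ≠ 0 := fun θ hθ =>
    (lt_of_lt_of_le (lt_min hε hT) hθ.1).ne'
  have hsin : ContinuousOn (fun θ => y * (Real.sin (θ * y) / θ)) (uIcc ε T) :=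
    continuousOn_const.mul (ContinuousOn.div (by fun_prop) continuousOn_id hpos)
  have hcos : ContinuousOn (fun θ => Real.cos (θ * y) / θ ^ 2) (uIcc ε T) :=
    ContinuousOn.div (by fun_prop) (by fun_prop) fun θ hθ => pow_ne_zero 2 (hpos θ hθ)
  have hderiv : ∀ θ ∈ uIcc ε T, HasDerivAt (fun θ => -Real.cos (θ * y) / θ)
      (y * (Real.sin (θ * y) / θ) + Real.cos (θ * y) / θ ^ 2) θ := fun θ hθ => by
    have hnum : HasDerivAt (fun θ => -Real.cos (θ * y)) (Real.sin (θ * y) * y) θ := by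
      simpa using ((Real.hasDerivAt_cos (θ * y)).comp θ ((hasDerivAt_id θ).mul_const y)).fun_neg
    refine (hnum.div (hasDerivAt_id' θ) (hpos θ hθ)).congr_deriv ?_
    field_simp
    ring
  have h := intervalIntegral.integral_eq_sub_of_hasDerivAt hderiv
    (hsin.intervalIntegrable.add hcos.intervalIntegrable)
  rw [intervalIntegral.integral_add hsin.intervalIntegrable hcos.intervalIntegrable,
    intervalIntegral.integral_const_mul, integral_sin_mul_div_self ε T y] at h
  linear_combination h

lemma integrableOn_cos_mul_div_sq {ε : ℝ} (hε : 0 < ε) (y : ℝ) :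
    IntegrableOn (fun θ => Real.cos (θ * y) / θ ^ 2) (Ioi ε) := by
  refine (integrableOn_Ioi_rpow_of_lt (by norm_num : (-2 : ℝ) < -1) hε).mono'
    (Measurable.aestronglyMeasurable (by fun_prop)) ?_
  filter_upwards [ae_restrict_mem measurableSet_Ioi] with θ (hθ : ε < θ)
  have hθ0 : 0 < θ := hε.trans hθ
  rw [Real.rpow_neg hθ0.le, Real.rpow_two, Real.norm_eq_abs, abs_div, abs_of_pos (pow_pos hθ0 2),
    ← one_div]
  gcongr
  exact Real.abs_cos_le_one _

lemma integral_Ioi_cos_mul_div_sq {ε : ℝ} (hε : 0 < ε) (y : ℝ) :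
    ∫ θ in Ioi ε, Real.cos (θ * y) / θ ^ 2
      = Real.cos (ε * y) / ε - (|y| * (π / 2) - y * sinIntegral (ε * y)) := by
  have hcos : Tendsto (fun T => Real.cos (T * y) / T) atTop (𝓝 0) := by
    refine squeeze_zero_norm' ?_ ((tendsto_const_nhds (x := (1 : ℝ))).div_atTop tendsto_id)
    filter_upwards [eventually_gt_atTop 0] with T hT
    rw [Real.norm_eq_abs, abs_div, abs_of_pos hT, id]
    gcongr
    exact Real.abs_cos_le_one _
  have hlim := ((hcos.const_sub (Real.cos (ε * y) / ε)).sub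
    ((tendsto_mul_sinIntegral_mul_atTop y).sub_const (y * sinIntegral (ε * y))))
  rw [sub_zero] at hlim
  refine tendsto_nhds_unique ((intervalIntegral_tendsto_integral_Ioi ε
    (integrableOn_cos_mul_div_sq hε y) tendsto_id).congr' ?_) hlim
  filter_upwards [eventually_gt_atTop 0] with T hT
  exact integral_cos_mul_div_sq hε hT y

lemma abs_cos_sub_one_le (u : ℝ) : |Real.cos u - 1| ≤ u ^ 2 / 2 := by
  rw [abs_sub_comm, abs_of_nonneg (sub_nonneg.mpr (Real.cos_le_one u))]
  linarith [Real.one_sub_sq_div_two_le_cos (x := u)]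

lemma abs_cos_sub_one_div_add_mul_sinIntegral_le {ε : ℝ} (hε : 0 < ε) (y : ℝ) :
    |(Real.cos (ε * y) - 1) / (π * ε) + y / π * sinIntegral (ε * y)|
      ≤ 3 / (2 * π) * ε * y ^ 2 := by
  have hSi : |sinIntegral (ε * y)| ≤ ε * |y| := by
    simpa [abs_mul, abs_of_pos hε] using abs_sinIntegral_le (ε * y)
  calc |(Real.cos (ε * y) - 1) / (π * ε) + y / π * sinIntegral (ε * y)|
      ≤ |Real.cos (ε * y) - 1| / (π * ε) + |y| / π * |sinIntegral (ε * y)| := by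
        refine (abs_add_le _ _).trans_eq ?_
        rw [abs_div, abs_of_pos (by positivity : 0 < π * ε), abs_mul, abs_div,
          abs_of_pos Real.pi_pos]
    _ ≤ (ε * y) ^ 2 / 2 / (π * ε) + |y| / π * (ε * |y|) := by
        gcongr
        exact abs_cos_sub_one_le _
    _ = 3 / (2 * π) * ε * y ^ 2 := by
        rw [mul_pow, ← sq_abs y]
        field_simp
        ring

/-- explicit evaluation of the high-pass part of ReLU and the bound on the
low-frequency remainder. `Si(u) = ∫_0^u sin(s)/s ds`. -/
theorem stmt19 (ε : ℝ) (hε : 0 < ε) (y : ℝ) :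
    (-(1 / Real.pi) * ∫ θ in Set.Ioi ε, Real.cos (θ * y) / θ ^ 2
        = |y| / 2 - Real.cos (ε * y) / (Real.pi * ε)
          - (y / Real.pi) * ∫ s in (0 : ℝ)..(ε * y), Real.sin s / s) ∧
    |max y 0 - (-(1 / Real.pi) * ∫ θ in Set.Ioi ε, Real.cos (θ * y) / θ ^ 2)
        - y / 2 - 1 / (Real.pi * ε)|
      ≤ 3 / (2 * Real.pi) * ε * y ^ 2 := by
  have hformula : -(1 / π) * ∫ θ in Ioi ε, Real.cos (θ * y) / θ ^ 2
      = |y| / 2 - Real.cos (ε * y) / (π * ε) - (y / π) * sinIntegral (ε * y) := by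
    rw [integral_Ioi_cos_mul_div_sq hε y]
    field_simp
    ring
  refine ⟨hformula, ?_⟩
  have hmax : max y 0 = (y + |y|) / 2 := by
    rcases le_total y 0 with h | h
    · rw [max_eq_right h, abs_of_nonpos h]; ring
    · rw [max_eq_left h, abs_of_nonneg h]; ring
  convert abs_cos_sub_one_div_add_mul_sinIntegral_le hε y using 2
  rw [hformula, hmax]
  field_simp
  ring
end
end
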